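/- arXiv:2010.00077 — 12 statements merged into one kernel-verified Lean document; each statement's English description precedes it below -/
import Mathlib

section
/- For every integer s ≥ 1, the alternating sum over i from 0 to s of (-1)^i · C_i · binom(i+1, s-i) equals 0, where C_i = binom(2i,i)/(i+1) is the i-th Catalan number. -/
/-!
Let `c(x) = ∑ Cᵢ xⁱ`, so that `c = 1 + x c²`. Substituting `x = -t(1 + t)`, the series
`Q(t) = (1 + t) c(-t(1 + t))` satisfies `Q = 1 + t - t Q²`, i.e. `(Q - 1)(1 + t(Q + 1)) = 0`;
the second factor is a unit, so `Q = 1`. Expanding, the coefficient of `tˢ` in `Q` is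
`∑ᵢ (-1)ⁱ Cᵢ binom(i + 1, s - i)`, which therefore vanishes for `s ≥ 1`.
-/

open Finset

namespace PowerSeries

variable {S : Type*} [CommRing S]

theorem coeff_mul_subst_eq_sum_range {b : S⟦X⟧} (hb : constantCoeff b = 0) (f g : S⟦X⟧)
    (n : ℕ) :
    coeff n (g * f.subst b) = ∑ d ∈ range (n + 1), coeff d f * coeff n (g * b ^ d) := by
  have coeff_subst_eq {k : ℕ} (hk : k ≤ n) :
      coeff k (f.subst b) = ∑ d ∈ range (n + 1), coeff d f * coeff k (b ^ d) := by
    rw [coeff_subst' (HasSubst.of_constantCoeff_zero' hb)]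
    refine finsum_eq_sum_of_support_subset _ fun d hd => ?_
    by_contra hdn
    have hX : X ^ d ∣ b ^ d := pow_dvd_pow_of_dvd (X_dvd_iff.mpr hb) d
    simp only [coe_range, Set.mem_Iio, not_lt] at hdn
    exact hd (by simp [X_pow_dvd_iff.mp hX k (by omega)])
  simp only [coeff_mul, mul_sum]
  rw [sum_comm]
  refine sum_congr rfl fun p hp => ?_
  rw [coeff_subst_eq (HasAntidiagonal.antidiagonal.snd_le hp), mul_sum]
  exact sum_congr rfl fun d _ => by ring

theorem subst_map_catalanSeries {a : S⟦X⟧} (ha : HasSubst a) :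
    (catalanSeries.map (Nat.castRingHom S)).subst a
      = 1 + a * ((catalanSeries.map (Nat.castRingHom S)).subst a) ^ 2 := by
  have h := congrArg (fun f => substAlgHom ha (f.map (Nat.castRingHom S)))
    catalanSeries_sq_mul_X_add_one
  simp only [map_add, map_mul, map_pow, map_X, map_one, substAlgHom_X, coe_substAlgHom] at h
  linear_combination -h

theorem one_add_X_mul_subst_catalanSeries_eq_one :
    (1 + X) * (catalanSeries.map (Nat.castRingHom S)).subst (-(X * (1 + X)) : S⟦X⟧) = 1 := by
  set c := (catalanSeries.map (Nat.castRingHom S)).subst (-(X * (1 + X)) : S⟦X⟧)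
  have hc : c = 1 + -(X * (1 + X)) * c ^ 2 :=
    subst_map_catalanSeries (HasSubst.of_constantCoeff_zero' (by simp))
  set Q := (1 + X) * c
  have hQ : Q = 1 + X - X * Q ^ 2 := by linear_combination (1 + X) * hc
  have hunit : IsUnit (1 + X * (Q + 1)) := isUnit_iff_constantCoeff.mpr (by simp)
  have hfactor : (Q - 1) * (1 + X * (Q + 1)) = 0 := by linear_combination hQ
  exact sub_eq_zero.mp (hunit.mul_left_eq_zero.mp hfactor)

theorem coeff_one_add_X_mul_pow_neg_X_mul_one_add_X {d n : ℕ} (hd : d ≤ n) :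
    coeff n ((1 + X) * (-(X * (1 + X))) ^ d : S⟦X⟧)
      = (-1) ^ d * ((d + 1).choose (n - d) : S) := by
  have h : ((1 + X) * (-(X * (1 + X))) ^ d : S⟦X⟧)
      = C ((-1) ^ d) * (X ^ d * (((1 + Polynomial.X) ^ (d + 1) : Polynomial S) : S⟦X⟧)) := by
    rw [neg_eq_neg_one_mul, mul_pow, mul_pow]
    simp only [map_pow, map_neg, map_one, Polynomial.coe_pow, Polynomial.coe_add,
      Polynomial.coe_one, Polynomial.coe_X]
    ring
  rw [h, coeff_C_mul, coeff_X_pow_mul', if_pos hd, Polynomial.coeff_coe,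
    Polynomial.coeff_one_add_X_pow]

end PowerSeries

open PowerSeries in
theorem catalan_alternating_sum (s : ℕ) (hs : 1 ≤ s) :
    ∑ i ∈ Finset.range (s + 1),
      (-1 : ℤ) ^ i * (catalan i : ℤ) * (Nat.choose (i + 1) (s - i) : ℤ) = 0 := by
  have h := congrArg (coeff s) (one_add_X_mul_subst_catalanSeries_eq_one (S := ℤ))
  rw [coeff_mul_subst_eq_sum_range (by simp), coeff_one, if_neg (by omega)] at h
  rw [← h]
  refine sum_congr rfl fun i hi => ?_
  rw [coeff_one_add_X_mul_pow_neg_X_mul_one_add_X (Nat.lt_succ_iff.mp (mem_range.mp hi))]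
  simp only [coeff_map, catalanSeries_coeff, eq_natCast]
  ring
end

section
/- For any non-negative integers m, n and s, binom(n,m) = sum_{j=0}^{s} (-1)^j C_j · binom(n+j+1, m-j) − sum_{j=s+1}^{2s+1} ( sum_{i=0}^{s} (-1)^i C_i · binom(i+1, j-i) ) · binom(n, m-j), where C_j denotes the j-th Catalan number. -/
/-!
The Catalan recurrence `C = 1 + y C²` for `C(y) = ∑ C_j y^j` turns, under `y = -x(1+x)`, into
`(F - 1)(1 + x(F + 1)) = 0` for `F = (1 + x) C(-x(1+x))`, so `F = 1`. Truncating `C` at degree `s`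
keeps this modulo `x^(s+1)`: the polynomial `P_s = ∑_{j ≤ s} (-1)^j C_j x^j (1+x)^(j+1)` has degree
at most `2s+1` and is `1 + ∑_{s < k ≤ 2s+1} p_k x^k`. The identity compares two computations of the
coefficient of `x^m` in `(1+x)^n P_s`.
-/

/-- Binomial coefficient `binom a b` with integer lower index `b`, vanishing for `b < 0`. -/
def ichoose (a : ℕ) (b : ℤ) : ℕ := if 0 ≤ b then a.choose b.toNat else 0

open Finset Polynomial

lemma coeff_X_pow_mul_X_add_one_pow {R : Type*} [Semiring R] (j a k : ℕ) :
    ((X ^ j * (X + 1) ^ a : R[X])).coeff k = ichoose a ((k : ℤ) - j) := by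
  rw [coeff_X_pow_mul', ichoose]
  by_cases h : j ≤ k
  · rw [if_pos h, if_pos (by omega), coeff_X_add_one_pow]
    congr 2
    omega
  · rw [if_neg h, if_neg (by omega), Nat.cast_zero]

noncomputable def catalanPoly (s : ℕ) : ℤ[X] :=
  ∑ j ∈ range (s + 1), C (catalan j : ℤ) * X ^ j

lemma coeff_catalanPoly {s k : ℕ} (hk : k ≤ s) : (catalanPoly s).coeff k = catalan k := by
  simp [catalanPoly, coeff_X_pow, Nat.lt_succ_iff.2 hk]

lemma X_pow_dvd_catalanPoly_sub (s : ℕ) :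
    X ^ (s + 1) ∣ catalanPoly s - 1 - X * catalanPoly s ^ 2 := by
  refine X_pow_dvd_iff.2 fun d hd => ?_
  rw [coeff_sub, coeff_sub, coeff_catalanPoly (by omega)]
  cases d with
  | zero => simp [catalan_zero]
  | succ k =>
    rw [coeff_X_mul, sq, coeff_mul, coeff_one, if_neg k.succ_ne_zero, catalan_succ']
    push_cast
    rw [sub_zero, sub_eq_zero]
    refine sum_congr rfl fun ij hij => ?_
    have := mem_antidiagonal.1 hij
    rw [coeff_catalanPoly (by omega), coeff_catalanPoly (by omega)]

noncomputable def catalanBinomPoly (s : ℕ) : ℤ[X] :=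
  ∑ j ∈ range (s + 1), C ((-1) ^ j * (catalan j : ℤ)) * (X ^ j * (X + 1) ^ (j + 1))

lemma catalanBinomPoly_eq_comp (s : ℕ) :
    catalanBinomPoly s = (X + 1) * (catalanPoly s).comp (-(X * (X + 1))) := by
  simp only [catalanBinomPoly, catalanPoly, Polynomial.sum_comp, mul_comp, C_comp, X_pow_comp,
    mul_sum]
  refine sum_congr rfl fun j _ => ?_
  rw [neg_pow (X * (X + 1)), mul_pow]
  simp only [map_mul, map_pow, map_neg, map_one]
  ring

lemma X_pow_dvd_catalanBinomPoly_sub_one (s : ℕ) : X ^ (s + 1) ∣ catalanBinomPoly s - 1 := by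
  obtain ⟨G, hG_def⟩ : ∃ G, G = (catalanPoly s).comp (-(X * (X + 1))) := ⟨_, rfl⟩
  have hG : X ^ (s + 1) ∣ G - 1 + X * (X + 1) * G ^ 2 := by
    obtain ⟨q, hq⟩ := X_pow_dvd_catalanPoly_sub s
    have h := congrArg (fun p : ℤ[X] => p.comp (-(X * (X + 1)))) hq
    simp only [sub_comp, one_comp, mul_comp, X_comp, pow_comp, ← hG_def] at h
    have hX : (X : ℤ[X]) ^ (s + 1) ∣ (-(X * (X + 1))) ^ (s + 1) :=
      pow_dvd_pow_of_dvd (dvd_mul_right _ _).neg_right _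
    convert hX.trans (Dvd.intro _ h.symm) using 1
    ring
  have hfactor : (catalanBinomPoly s - 1) * (1 + X * (catalanBinomPoly s + 1))
      = (X + 1) * (G - 1 + X * (X + 1) * G ^ 2) := by
    rw [catalanBinomPoly_eq_comp, ← hG_def]; ring
  have hunit : ¬ X ∣ 1 + X * (catalanBinomPoly s + 1) := by
    rw [X_dvd_iff, coeff_add, coeff_one_zero, coeff_X_mul_zero]
    norm_num
  exact prime_X.pow_dvd_of_dvd_mul_right _ hunit (hfactor ▸ dvd_mul_of_dvd_right hG _)

lemma coeff_catalanBinomPoly_of_le {s k : ℕ} (hk : k ≤ s) :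
    (catalanBinomPoly s).coeff k = if k = 0 then 1 else 0 := by
  have h := X_pow_dvd_iff.1 (X_pow_dvd_catalanBinomPoly_sub_one s) k (by omega)
  rwa [coeff_sub, coeff_one, sub_eq_zero] at h

lemma coeff_catalanBinomPoly (s k : ℕ) :
    (catalanBinomPoly s).coeff k =
      ∑ i ∈ range (s + 1), (-1) ^ i * (catalan i : ℤ) * (ichoose (i + 1) ((k : ℤ) - i) : ℤ) := by
  simp only [catalanBinomPoly, finsetSum_coeff, coeff_C_mul, coeff_X_pow_mul_X_add_one_pow]

lemma natDegree_catalanBinomPoly_le (s : ℕ) : (catalanBinomPoly s).natDegree ≤ 2 * s + 1 := by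
  refine natDegree_sum_le_of_forall_le _ _ fun j hj => ?_
  have hj : j ≤ s := Nat.lt_succ_iff.1 (mem_range.1 hj)
  refine (natDegree_C_mul_le _ _).trans ((natDegree_mul_le).trans ?_)
  have h1 : (X ^ j : ℤ[X]).natDegree ≤ j := natDegree_X_pow_le j
  have h2 : ((X + 1) ^ (j + 1) : ℤ[X]).natDegree ≤ j + 1 := by compute_degree
  omega

lemma coeff_X_add_one_pow_mul {R : Type*} [CommSemiring R] (n m N : ℕ) {p : R[X]}
    (hp : p.natDegree ≤ N) :
    ((X + 1) ^ n * p).coeff m = ∑ k ∈ range (N + 1), p.coeff k * ichoose n ((m : ℤ) - k) := by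
  conv_lhs => rw [p.as_sum_range_C_mul_X_pow' (n := N + 1) (by omega), mul_sum, finsetSum_coeff]
  refine sum_congr rfl fun k _ => ?_
  rw [mul_left_comm, coeff_C_mul, mul_comm _ (X ^ k), coeff_X_pow_mul_X_add_one_pow]

lemma coeff_X_add_one_pow_mul_catalanBinomPoly (n m s : ℕ) :
    ((X + 1) ^ n * catalanBinomPoly s).coeff m =
      ∑ j ∈ range (s + 1),
        (-1) ^ j * (catalan j : ℤ) * (ichoose (n + j + 1) ((m : ℤ) - j) : ℤ) := by
  rw [catalanBinomPoly, mul_sum, finsetSum_coeff]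
  refine sum_congr rfl fun j _ => ?_
  have h : ((X + 1) ^ n * (X ^ j * (X + 1) ^ (j + 1)) : ℤ[X])
      = X ^ j * (X + 1) ^ (n + j + 1) := by ring
  rw [mul_left_comm, h, coeff_C_mul, coeff_X_pow_mul_X_add_one_pow]

theorem choose_expression_via_catalan (m n s : ℕ) :
    (n.choose m : ℤ) =
      (∑ j ∈ Finset.range (s + 1),
        (-1 : ℤ) ^ j * (catalan j : ℤ) * (ichoose (n + j + 1) ((m : ℤ) - j) : ℤ))
      - ∑ j ∈ Finset.Icc (s + 1) (2 * s + 1),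
          (∑ i ∈ Finset.range (s + 1),
            (-1 : ℤ) ^ i * (catalan i : ℤ) * (ichoose (i + 1) ((j : ℤ) - i) : ℤ))
          * (ichoose n ((m : ℤ) - j) : ℤ) := by
  have h := coeff_X_add_one_pow_mul n m (2 * s + 1) (natDegree_catalanBinomPoly_le s)
  rw [coeff_X_add_one_pow_mul_catalanBinomPoly,
    ← sum_range_add_sum_Ico _ (show s + 1 ≤ 2 * s + 1 + 1 by omega), Ico_add_one_right_eq_Icc] at h
  have hlow : ∑ k ∈ range (s + 1), (catalanBinomPoly s).coeff k * ichoose n ((m : ℤ) - k)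
      = n.choose m := by
    rw [sum_eq_single_of_mem 0 (by simp) fun k hk hk0 => by
      rw [coeff_catalanBinomPoly_of_le (Nat.lt_succ_iff.1 (mem_range.1 hk)), if_neg hk0, zero_mul]]
    simp [coeff_catalanBinomPoly_of_le, ichoose]
  rw [hlow] at h
  simp only [coeff_catalanBinomPoly] at h
  linarith
end

section
/- For every integer ℓ ≥ 1, the sum over all tuples (m_1, ..., m_t) of positive integers (of arbitrary length t ≥ 1) with m_1 + ... + m_t = ℓ of the quantity (-1)^t · binom(ℓ - m_1, m_1 - 1) · binom(ℓ - m_2, m_2) · ... · binom(ℓ - m_t, m_t) equals (-1)^ℓ · C_{ℓ-1}, where C_{ℓ-1} is the (ℓ-1)-st Catalan number. -/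
/-!
Write `U ℓ = ∑ₘ (ℓ - m).choose m • Xᵐ` (`fibonacciSeries ℓ`). Splitting off the first block
shows that signed composition sums with block weights `(ℓ - m).choose m` are the coefficients of
`1 / U ℓ`, and that the sum in question is `-[X^(ℓ-1)] (U (ℓ-1) / U ℓ)`. Pascal's rule gives
`U (ℓ + 2) = U (ℓ + 1) + X • U ℓ`, so the ratios `R ℓ = U ℓ / U (ℓ + 1)` (`fibonacciRatio ℓ`)
satisfy `R (ℓ + 1) * (1 + X • R ℓ) = 1`. Hence `R ℓ` agrees up to order `ℓ` with the solution
`K = ∑ₖ (-1)ᵏ Cₖ Xᵏ` of `K * (1 + X • K) = 1`, which is Segner's recurrence for the Catalan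
numbers.
-/

open PowerSeries

namespace Composition

instance : Unique (Composition 0) where
  default := ones 0
  uniq c := eq_ones_iff_length.2 (Nat.le_zero.1 c.length_le)

variable {n : ℕ}

lemma cons_headI_tail_blocks (c : Composition (n + 1)) :
    c.blocks.headI :: c.blocks.tail = c.blocks := by
  obtain ⟨a, t, ht⟩ := List.exists_cons_of_ne_nil
    (List.ne_nil_of_length_pos (c.length_pos_of_pos n.succ_pos))
  simp [ht]

lemma headI_blocks_pos (c : Composition (n + 1)) : 0 < c.blocks.headI :=
  c.blocks_pos (c.cons_headI_tail_blocks ▸ List.mem_cons_self)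

/-- A composition of `n + 1` is a first block `k + 1` followed by a composition of `n - k`. -/
def consEquiv (n : ℕ) : Composition (n + 1) ≃ Σ k : Fin (n + 1), Composition (n - k) where
  toFun c :=
    have hsum : c.blocks.headI + c.blocks.tail.sum = n + 1 := by
      rw [← List.sum_cons, c.cons_headI_tail_blocks, c.blocks_sum]
    ⟨⟨c.blocks.headI - 1, by omega⟩,
      ⟨c.blocks.tail, fun hi => c.blocks_pos (List.mem_of_mem_tail hi),
        show c.blocks.tail.sum = n - (c.blocks.headI - 1) by
          have := c.headI_blocks_pos; omega⟩⟩
  invFun p :=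
    ⟨(p.1 + 1) :: p.2.blocks,
      by
        rintro i (_ | ⟨_, hi⟩)
        exacts [Nat.succ_pos _, p.2.blocks_pos hi],
      by have := p.2.blocks_sum; have := p.1.2; simp only [List.sum_cons]; omega⟩
  left_inv c := Composition.ext <| by
    simp only [Nat.sub_add_cancel c.headI_blocks_pos, c.cons_headI_tail_blocks]
  right_inv := by
    rintro ⟨k, c⟩
    exact Sigma.ext rfl (heq_of_eq (Composition.ext rfl))

lemma sum_succ_eq_sum_cons {M : Type*} [AddCommMonoid M] (F : List ℕ → M) (n : ℕ) :
    ∑ c : Composition (n + 1), F c.blocks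
      = ∑ k ∈ Finset.range (n + 1), ∑ c : Composition (n - k), F ((k + 1) :: c.blocks) := by
  rw [← (consEquiv n).symm.sum_comp, Fintype.sum_sigma, ← Fin.sum_univ_eq_sum_range
    (fun k => ∑ c : Composition (n - k), F ((k + 1) :: c.blocks))]
  rfl

end Composition

section SignedCompositionSum

variable {R : Type*} [CommRing R]

def signedCompositionSum (f : ℕ → R) (n : ℕ) : R :=
  ∑ c : Composition n, (-1) ^ c.length * (c.blocks.map f).prod

lemma signedCompositionSum_zero (f : ℕ → R) : signedCompositionSum f 0 = 1 := by
  rw [signedCompositionSum, Fintype.sum_unique]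
  show (-1 : R) ^ 0 * ([].map f).prod = 1
  simp

lemma sum_signed_headI_mul_prod_tail (g f : ℕ → R) (n : ℕ) :
    ∑ c : Composition (n + 1), (-1) ^ c.length * g c.blocks.headI * (c.blocks.tail.map f).prod
      = -∑ k ∈ Finset.range (n + 1), g (k + 1) * signedCompositionSum f (n - k) := by
  rw [Composition.sum_succ_eq_sum_cons fun l => (-1) ^ l.length * g l.headI * (l.tail.map f).prod,
    ← Finset.sum_neg_distrib]
  refine Finset.sum_congr rfl fun k _ => ?_
  rw [signedCompositionSum, Finset.mul_sum, ← Finset.sum_neg_distrib]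
  refine Finset.sum_congr rfl fun c _ => ?_
  simp only [List.length_cons, List.headI_cons, List.tail_cons, Composition.length]
  ring

lemma signedCompositionSum_succ (f : ℕ → R) (n : ℕ) :
    signedCompositionSum f (n + 1)
      = -∑ k ∈ Finset.range (n + 1), f (k + 1) * signedCompositionSum f (n - k) := by
  rw [← sum_signed_headI_mul_prod_tail, signedCompositionSum]
  refine Finset.sum_congr rfl fun c _ => ?_
  conv_lhs => rw [← c.cons_headI_tail_blocks]
  rw [List.map_cons, List.prod_cons, mul_assoc]

lemma one_add_X_mul_mul_mk_signedCompositionSum (f : ℕ → R) :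
    (1 + X * mk fun m => f (m + 1)) * mk (signedCompositionSum f) = 1 := by
  ext (_ | n)
  · simp [signedCompositionSum_zero]
  · rw [add_mul, one_mul, mul_assoc, map_add, coeff_succ_X_mul, coeff_mul,
      Finset.Nat.sum_antidiagonal_eq_sum_range_succ_mk]
    simp [signedCompositionSum_succ]

end SignedCompositionSum

def fibonacciSeries (ℓ : ℕ) : ℤ⟦X⟧ :=
  mk fun m => ((ℓ - m).choose m : ℤ)

lemma constantCoeff_fibonacciSeries (ℓ : ℕ) : constantCoeff (fibonacciSeries ℓ) = 1 := by
  simp [fibonacciSeries, ← coeff_zero_eq_constantCoeff_apply]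

lemma fibonacciSeries_add_two (ℓ : ℕ) :
    fibonacciSeries (ℓ + 2) = fibonacciSeries (ℓ + 1) + X * fibonacciSeries ℓ := by
  ext (_ | m)
  · simp [fibonacciSeries]
  rw [map_add, coeff_succ_X_mul]
  simp only [fibonacciSeries, coeff_mk]
  rcases le_or_gt m ℓ with h | h
  · rw [show ℓ + 2 - (m + 1) = ℓ - m + 1 by omega, show ℓ + 1 - (m + 1) = ℓ - m by omega,
      Nat.choose_succ_succ', Nat.cast_add, add_comm]
  · rw [show ℓ + 2 - (m + 1) = 0 by omega, show ℓ + 1 - (m + 1) = 0 by omega,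
      show ℓ - m = 0 by omega, Nat.choose_eq_zero_of_lt (by omega : 0 < m)]
    simp

lemma fibonacciSeries_eq_one_add_X_mul (ℓ : ℕ) :
    fibonacciSeries ℓ = 1 + X * mk fun m => ((ℓ - (m + 1)).choose (m + 1) : ℤ) := by
  ext (_ | m)
  · simp [fibonacciSeries]
  · simp [fibonacciSeries, coeff_succ_X_mul]

lemma fibonacciSeries_mul_invOfUnit (ℓ : ℕ) :
    fibonacciSeries ℓ * (fibonacciSeries ℓ).invOfUnit 1 = 1 :=
  mul_invOfUnit _ _ (constantCoeff_fibonacciSeries ℓ)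

lemma mk_signedCompositionSum_eq_invOfUnit (ℓ : ℕ) :
    mk (signedCompositionSum fun m => ((ℓ - m).choose m : ℤ))
      = (fibonacciSeries ℓ).invOfUnit 1 := by
  refine left_inv_eq_right_inv ?_ (fibonacciSeries_mul_invOfUnit ℓ)
  rw [mul_comm, fibonacciSeries_eq_one_add_X_mul]
  exact one_add_X_mul_mul_mk_signedCompositionSum fun m => ((ℓ - m).choose m : ℤ)

noncomputable def fibonacciRatio (ℓ : ℕ) : ℤ⟦X⟧ :=
  fibonacciSeries ℓ * (fibonacciSeries (ℓ + 1)).invOfUnit 1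

lemma constantCoeff_fibonacciRatio (ℓ : ℕ) : constantCoeff (fibonacciRatio ℓ) = 1 := by
  simp [fibonacciRatio, constantCoeff_fibonacciSeries]

lemma fibonacciRatio_succ_mul (ℓ : ℕ) :
    fibonacciRatio (ℓ + 1) * (1 + X * fibonacciRatio ℓ) = 1 := by
  unfold fibonacciRatio
  set V := (fibonacciSeries (ℓ + 2)).invOfUnit 1
  linear_combination (X * fibonacciSeries ℓ * V) * fibonacciSeries_mul_invOfUnit (ℓ + 1)
    + fibonacciSeries_mul_invOfUnit (ℓ + 2) - V * fibonacciSeries_add_two ℓ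

lemma coeff_fibonacciRatio {k ℓ : ℕ} (hk : k ≤ ℓ) :
    coeff k (fibonacciRatio ℓ) = (-1) ^ k * catalan k := by
  induction k using Nat.strong_induction_on generalizing ℓ with
  | _ k ih =>
  rcases k with _ | k
  · simp [constantCoeff_fibonacciRatio]
  obtain ⟨ℓ, rfl⟩ : ∃ ℓ', ℓ = ℓ' + 1 := ⟨ℓ - 1, by omega⟩
  have h : fibonacciRatio (ℓ + 1) = 1 - X * (fibonacciRatio ℓ * fibonacciRatio (ℓ + 1)) := by
    linear_combination fibonacciRatio_succ_mul ℓ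
  rw [h, map_sub, coeff_one, if_neg k.succ_ne_zero, zero_sub, coeff_succ_X_mul, coeff_mul,
    catalan_succ', Nat.cast_sum, Finset.mul_sum, ← Finset.sum_neg_distrib]
  refine Finset.sum_congr rfl fun p hp => ?_
  rw [Finset.HasAntidiagonal.mem_antidiagonal] at hp
  rw [ih p.1 (by omega) (by omega), ih p.2 (by omega) (by omega), ← hp]
  push_cast
  ring

/-- Lemma: the alternating sum over compositions of `ℓ` equals `(-1)^ℓ C_{ℓ-1}`. -/
theorem composition_sum_eq_catalan (ℓ : ℕ) (hl : 1 ≤ ℓ) :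
    ∑ c : Composition ℓ,
      (-1 : ℤ) ^ c.length * ((ℓ - c.blocks.headI).choose (c.blocks.headI - 1) : ℤ)
        * (c.blocks.tail.map (fun m => ((ℓ - m).choose m : ℤ))).prod
      = (-1 : ℤ) ^ ℓ * (catalan (ℓ - 1) : ℤ) := by
  obtain ⟨n, rfl⟩ : ∃ n, ℓ = n + 1 := ⟨ℓ - 1, by omega⟩
  rw [sum_signed_headI_mul_prod_tail fun m => ((n + 1 - m).choose (m - 1) : ℤ)]
  calc _ = -coeff n (fibonacciRatio n) := by
        rw [fibonacciRatio, ← mk_signedCompositionSum_eq_invOfUnit, coeff_mul,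
          Finset.Nat.sum_antidiagonal_eq_sum_range_succ_mk]
        simp [fibonacciSeries]
    _ = _ := by
        rw [coeff_fibonacciRatio le_rfl]
        simp [pow_succ]
end

section
/- For every integer ℓ ≥ 2 and j with 0 ≤ j ≤ ℓ-2, the sum over all tuples (m_1, ..., m_t) with m_1 ≥ 0, m_2, ..., m_t > 0 and m_1 + ... + m_t = ℓ - j - 1 of (-1)^t · binom(ℓ - m_1, m_1) · binom(ℓ - m_2, m_2) · ... · binom(ℓ - m_t, m_t) equals 0. -/
/-!
Write `a m = (ℓ - m).choose m`, so `a 0 = 1` and `A(x) = ∑ a m xᵐ` is invertible. Expanding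
`1 / A = ∑ (1 - A)ᵗ` shows that the signed sum over compositions of `n` of the products of the
`a` of the blocks is the coefficient `gₙ` of `xⁿ` in `1 / A`. The tuple sum is then
`-∑ₘ a m · g(N - m) = -[xᴺ](A · A⁻¹)` with `N = ℓ - j - 1 ≥ 1`, which is zero. Concretely, splitting
off the first block gives the recursion `gₙ₊₁ = -∑ₖ a (k + 1) · gₙ₋ₖ`, which is exactly this identity.
-/

open Finset

namespace Composition

/-- `⟨k, c⟩` is the composition with first block `k + 1` followed by the blocks of `c`. -/
def firstBlockEquiv (n : ℕ) : Composition (n + 1) ≃ Σ k : Fin (n + 1), Composition (n - k) where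
  toFun c :=
    have hne : c.blocks ≠ [] := c.blocks_eq_nil.not.2 n.succ_ne_zero
    have hsum : c.blocks.head hne + c.blocks.tail.sum = n + 1 := by
      rw [← List.sum_cons, List.cons_head_tail, c.blocks_sum]
    have hpos : 0 < c.blocks.head hne := c.blocks_pos (List.head_mem hne)
    ⟨⟨c.blocks.head hne - 1, by omega⟩,
      ⟨c.blocks.tail, fun hi => c.blocks_pos (List.mem_of_mem_tail hi), by simp only; omega⟩⟩
  invFun p :=
    ⟨(p.1 + 1 : ℕ) :: p.2.blocks,
      by rintro i (_ | ⟨_, hi⟩) <;> [omega; exact p.2.blocks_pos hi],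
      by rw [List.sum_cons, p.2.blocks_sum]; omega⟩
  left_inv c := by
    have hne : c.blocks ≠ [] := c.blocks_eq_nil.not.2 n.succ_ne_zero
    have hpos : 0 < c.blocks.head hne := c.blocks_pos (List.head_mem hne)
    ext1
    simp only [Nat.sub_add_cancel hpos, List.cons_head_tail]
  right_inv _ := rfl

variable {R : Type*} [CommRing R]

def alternatingProdSum (a : ℕ → R) (n : ℕ) : R :=
  ∑ c : Composition n, (-1) ^ c.length * (c.blocks.map a).prod

theorem alternatingProdSum_succ (a : ℕ → R) (n : ℕ) :
    alternatingProdSum a (n + 1) = -∑ k ∈ range (n + 1), a (k + 1) * alternatingProdSum a (n - k) := by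
  rw [alternatingProdSum, ← (firstBlockEquiv n).symm.sum_comp, ← univ_sigma_univ, sum_sigma,
    ← Fin.sum_univ_eq_sum_range, ← sum_neg_distrib]
  refine sum_congr rfl fun k _ => ?_
  rw [alternatingProdSum, mul_sum, ← sum_neg_distrib]
  refine sum_congr rfl fun c _ => ?_
  change (-1) ^ (c.blocks.length + 1) * (a (k + 1) * (c.blocks.map a).prod) = _
  rw [blocks_length]
  ring

theorem sum_mul_alternatingProdSum_eq_zero (a : ℕ → R) (ha : a 0 = 1) {n : ℕ} (hn : n ≠ 0) :
    ∑ m ∈ range (n + 1), a m * alternatingProdSum a (n - m) = 0 := by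
  obtain ⟨n, rfl⟩ := Nat.exists_eq_succ_of_ne_zero hn
  rw [sum_range_succ', ha, one_mul, Nat.sub_zero, alternatingProdSum_succ]
  simp only [Nat.succ_sub_succ, add_neg_cancel]

end Composition

/-- The sum over tuples `(m₁,…,m_t)` with `m₁ ≥ 0`, `m₂,…,m_t > 0` and sum `ℓ - j - 1`
(encoded as a choice of `m₁` together with a composition of the remainder) vanishes. -/
theorem tuple_sum_vanishes (ℓ j : ℕ) (hl : 2 ≤ ℓ) (hj : j ≤ ℓ - 2) :
    ∑ m1 ∈ Finset.range (ℓ - j), ∑ c : Composition (ℓ - j - 1 - m1),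
      (-1 : ℤ) ^ (c.length + 1) * ((ℓ - m1).choose m1 : ℤ)
        * (c.blocks.map (fun m => ((ℓ - m).choose m : ℤ))).prod = 0 := by
  set a : ℕ → ℤ := fun m => ((ℓ - m).choose m : ℤ)
  obtain ⟨n, hn⟩ : ∃ n, ℓ - j = n + 1 := ⟨ℓ - j - 1, by omega⟩
  calc _ = -∑ m ∈ range (ℓ - j), a m * Composition.alternatingProdSum a (ℓ - j - 1 - m) := by
        simp only [Composition.alternatingProdSum, mul_sum, ← sum_neg_distrib]
        refine sum_congr rfl fun m _ => sum_congr rfl fun c _ => ?_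
        ring
    _ = 0 := by
      rw [hn, Nat.add_sub_cancel, Composition.sum_mul_alternatingProdSum_eq_zero a (by simp [a])
        (by omega), neg_zero]
end

section
/- For every integer ℓ ≥ 1 and every indeterminate x, the polynomial identity (-1)^{ℓ-1} · (x-1)^ℓ = sum_{m=0}^{⌊(ℓ-1)/2⌋} binom(ℓ-1-m, m) · x^m (x-1)^{m+1} − sum_{m=1}^{⌊ℓ/2⌋} binom(ℓ-1-m, m-1) · x^m (x-1)^m holds in ℝ[x]. -/
/-!
Put `z = x (x - 1)` and let `F n = ∑_{i+j=n} C(j,i) zⁱ` be the Fibonacci polynomials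
(`F 0 = F 1 = 1`, `F (n+2) = F (n+1) + z F n`; at `z = 1` these are `Nat.fib (n+1)`).
For `ℓ = n + 2` the two sums are `(x - 1) F (n+1)` and `z F n`, so the identity says
`F (n+1) - x F n = (1 - x)^(n+1)`. This holds by induction, because for this particular `z`
the Fibonacci recurrence gives `F (n+2) - x F (n+1) = (1 - x) (F (n+1) - x F n)`.
-/

open Polynomial Finset

section CommSemiring

variable {R : Type*} [CommSemiring R]

def fibSum (z : R) (n : ℕ) : R :=
  ∑ p ∈ antidiagonal n, (p.2.choose p.1 : R) * z ^ p.1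

theorem fibSum_zero (z : R) : fibSum z 0 = 1 := by simp [fibSum]

theorem fibSum_one (z : R) : fibSum z 1 = 1 := by simp [fibSum, Nat.antidiagonal_succ]

theorem fibSum_add_two (z : R) (n : ℕ) :
    fibSum z (n + 2) = fibSum z (n + 1) + z * fibSum z n := by
  rw [fibSum, fibSum, fibSum, Nat.antidiagonal_succ_succ', Nat.antidiagonal_succ, sum_cons,
    sum_cons, sum_cons, sum_map, sum_map, mul_sum, add_assoc, ← sum_add_distrib]
  simp only [Nat.choose_zero_right, Nat.choose_zero_succ, Nat.cast_zero, zero_mul, zero_add]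
  refine congrArg _ (sum_congr rfl fun p _ => ?_)
  simp only [Function.Embedding.coe_prodMap, Function.Embedding.coeFn_mk,
    Function.Embedding.coe_refl, Prod.map_fst, Prod.map_snd, id, Nat.succ_eq_add_one,
    Nat.choose_succ_succ, Nat.cast_add]
  ring

theorem fibSum_eq_sum_range (z : R) (n : ℕ) :
    fibSum z n = ∑ m ∈ range (n / 2 + 1), ((n - m).choose m : R) * z ^ m := by
  rw [fibSum, Nat.sum_antidiagonal_eq_sum_range_succ (fun i j => (j.choose i : R) * z ^ i)]
  refine (sum_subset (range_subset_range.2 (by omega)) fun m hm hm' => ?_).symm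
  simp only [mem_range] at hm hm'
  simp [Nat.choose_eq_zero_of_lt (show n - m < m by omega)]

end CommSemiring

theorem fibSum_succ_sub_mul {R : Type*} [CommRing R] (x : R) (n : ℕ) :
    fibSum (x * (x - 1)) (n + 1) - x * fibSum (x * (x - 1)) n = (1 - x) ^ (n + 1) := by
  induction n with
  | zero => simp [fibSum_zero, fibSum_one]
  | succ n ih => rw [fibSum_add_two, pow_succ, ← ih]; ring

open Polynomial in
theorem power_x_sub_one_expansion (ℓ : ℕ) (hl : 1 ≤ ℓ) :
    (-1 : ℝ[X]) ^ (ℓ - 1) * (X - 1) ^ ℓ =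
      (∑ m ∈ Finset.range ((ℓ - 1) / 2 + 1),
        C ((ℓ - 1 - m).choose m : ℝ) * X ^ m * (X - 1) ^ (m + 1))
      - ∑ m ∈ Finset.Icc 1 (ℓ / 2),
          C ((ℓ - 1 - m).choose (m - 1) : ℝ) * X ^ m * (X - 1) ^ m := by
  rcases hl.eq_or_lt with rfl | hl2
  · simp
  obtain ⟨n, rfl⟩ : ∃ n, ℓ = n + 2 := ⟨ℓ - 2, by omega⟩
  rw [show n + 2 - 1 = n + 1 by omega]
  have hA : ∑ m ∈ range ((n + 1) / 2 + 1), C ((n + 1 - m).choose m : ℝ) * X ^ m * (X - 1) ^ (m + 1)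
      = (X - 1) * fibSum (X * (X - 1)) (n + 1) := by
    rw [fibSum_eq_sum_range, mul_sum]
    refine sum_congr rfl fun m _ => ?_
    simp only [map_natCast, mul_pow]
    ring
  have hB : ∑ m ∈ Icc 1 ((n + 2) / 2), C ((n + 1 - m).choose (m - 1) : ℝ) * X ^ m * (X - 1) ^ m
      = X * (X - 1) * fibSum (X * (X - 1)) n := by
    rw [fibSum_eq_sum_range, mul_sum, ← Ico_add_one_right_eq_Icc, sum_Ico_eq_sum_range,
      show (n + 2) / 2 + 1 - 1 = n / 2 + 1 by omega]
    refine sum_congr rfl fun m _ => ?_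
    simp only [map_natCast, mul_pow, show n + 1 - (1 + m) = n - m by omega, Nat.add_sub_cancel_left]
    ring
  have key := fibSum_succ_sub_mul (X : ℝ[X]) n
  rw [← neg_sub X 1, neg_pow] at key
  rw [hA, hB]
  linear_combination (1 - X) * key
end

section
/- Let n ≥ 1 and let P ∈ ℝ[x_1,...,x_n] be a polynomial with P(0,...,0) ≠ 0 which vanishes at every point of {0,1}^n other than the origin. Then deg P ≥ n. -/
/-!
The alternating sum `∑_{S ⊆ [n]} (-1)^|S| P(1_S)` over the cube is an `n`-th finite difference,
so it kills every polynomial of total degree `< n`: on a monomial `x^d` it factors as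
`∏ i, (0^(d i) - 1)`, and some exponent `d i` must vanish. If `P` vanishes on the cube away from
the origin, this sum is `P(0) ≠ 0`.
-/

open Finset MvPolynomial

theorem sum_neg_one_pow_card_mul_prod_indicator {σ R : Type*} [Fintype σ] [DecidableEq σ]
    [CommRing R] (h : σ → R → R) :
    ∑ S : Finset σ, (-1) ^ #S * ∏ i, h i (if i ∈ S then 1 else 0) = ∏ i, (h i 0 - h i 1) := by
  simp_rw [sub_eq_neg_add, prod_add, ← powerset_univ, prod_neg, ← compl_eq_univ_sdiff]
  refine sum_congr rfl fun S _ => ?_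
  rw [← prod_mul_prod_compl S, mul_assoc]
  congr 2
  · exact prod_congr rfl fun i hi => by rw [if_pos hi]
  · exact prod_congr rfl fun i hi => by rw [if_neg (mem_compl.1 hi)]

theorem exists_exponent_eq_zero_of_totalDegree_lt_card {σ R : Type*} [Fintype σ] [CommSemiring R]
    {P : MvPolynomial σ R} (hP : P.totalDegree < Fintype.card σ) {d : σ →₀ ℕ}
    (hd : d ∈ P.support) : ∃ i, d i = 0 := by
  by_contra! hpos
  have hcard : Fintype.card σ ≤ d.sum fun _ e => e := by
    rw [Finsupp.sum_fintype _ _ fun _ => rfl, Fintype.card_eq_sum_ones]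
    exact sum_le_sum fun i _ => Nat.one_le_iff_ne_zero.2 (hpos i)
  exact (le_totalDegree hd).not_gt (hP.trans_le hcard)

theorem sum_neg_one_pow_card_mul_eval_indicator_eq_zero {σ R : Type*} [Fintype σ]
    [DecidableEq σ] [CommRing R] {P : MvPolynomial σ R} (hP : P.totalDegree < Fintype.card σ) :
    ∑ S : Finset σ, (-1) ^ #S * eval (fun i => if i ∈ S then 1 else 0) P = 0 := by
  simp_rw [eval_eq', mul_sum]
  rw [sum_comm]
  refine sum_eq_zero fun d hd => ?_
  obtain ⟨i, hi⟩ := exists_exponent_eq_zero_of_totalDegree_lt_card hP hd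
  calc ∑ S : Finset σ, (-1) ^ #S * (coeff d P * ∏ j, (if j ∈ S then 1 else 0) ^ d j)
      = coeff d P * ∏ j, ((0 : R) ^ d j - 1 ^ d j) := by
        rw [← sum_neg_one_pow_card_mul_prod_indicator fun j (x : R) => x ^ d j, mul_sum]
        exact sum_congr rfl fun S _ => mul_left_comm _ _ _
    _ = 0 := by rw [prod_eq_zero (mem_univ i) (by rw [hi, pow_zero, pow_zero, sub_self]), mul_zero]

theorem alon_furedi_general (n : ℕ) (P : MvPolynomial (Fin n) ℝ)
    (h0 : MvPolynomial.eval (0 : Fin n → ℝ) P ≠ 0)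
    (hvan : ∀ a : Fin n → ℝ, (∀ i, a i = 0 ∨ a i = 1) → a ≠ 0 →
      MvPolynomial.eval a P = 0) :
    n ≤ P.totalDegree := by
  by_contra! hdeg
  have hsum := sum_neg_one_pow_card_mul_eval_indicator_eq_zero (P := P) (by simpa using hdeg)
  rw [sum_eq_single ∅ (fun S _ hS => ?_) (by simp)] at hsum
  · exact h0 (by simpa [Pi.zero_def] using hsum)
  · obtain ⟨i, hi⟩ := nonempty_iff_ne_empty.2 hS
    rw [hvan _ (fun j => by split_ifs <;> simp) (fun h => by simpa [hi] using congrFun h i), mul_zero]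

theorem alon_furedi (n : ℕ) (hn : 1 ≤ n) (P : MvPolynomial (Fin n) ℝ)
    (h0 : MvPolynomial.eval (0 : Fin n → ℝ) P ≠ 0)
    (hvan : ∀ a : Fin n → ℝ, (∀ i, a i = 0 ∨ a i = 1) → a ≠ 0 →
      MvPolynomial.eval a P = 0) :
    n ≤ P.totalDegree :=
  alon_furedi_general n P h0 hvan
end

section
/- Let k ≥ 2 and n ≥ 1. Let P ∈ ℝ[x_1,...,x_n] have zeroes of multiplicity at least k at all points of {0,1}^n \ {(0,...,0)}, and a zero of multiplicity exactly k-1 at the origin. Then deg P ≥ n + 2k - 2. -/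
/-- `P` has a zero of multiplicity at least `k` at `a`: every monomial of `P(x + a)`
has total degree at least `k`. -/
def hasZeroOfMultAtLeast {n : ℕ} {R : Type*} [CommRing R]
    (P : MvPolynomial (Fin n) R) (a : Fin n → R) (k : ℕ) : Prop :=
  ∀ d ∈ (MvPolynomial.bind₁ (fun i => MvPolynomial.X i + MvPolynomial.C (a i)) P).support,
    k ≤ ∑ i, d i

/-!
Induction on `n + k`. A zero of multiplicity at least `k` at `a` means that `P(x + a)` lies in
`𝔪ᵏ`, where `𝔪` is the ideal generated by the variables. Put `A(x') = P(0, x')` and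
`B(x') = P(1, x')`.

If some monomial of `P` of the lowest degree `k - 1` avoids `x₀`, then `B - A` satisfies the
hypotheses in `n - 1` variables with the same `k`, and its degree is smaller than that of `P`.

Otherwise `A` vanishes to order `k` at the origin as well, so `P` minus its interpolation
`A + x₀ (B - A)` still satisfies the hypotheses, and it vanishes on `x₀ = 0` and on `x₀ = 1`.
It is therefore `x₀ (x₀ - 1) S`, and `S` satisfies the hypotheses with `k - 1`: at a cube point
the recentred factor is `x₀ (x₀ ± 1)`, and `x₀ ± 1` is a unit modulo every power of `𝔪`. The
degree of `S` is that of `P` minus at least two.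
-/

open MvPolynomial

namespace MvPolynomial

variable {σ τ R : Type*} [CommRing R]

theorem map_mem_pow_idealOfVars {F : Type*} [FunLike F (MvPolynomial σ R) (MvPolynomial τ R)]
    [RingHomClass F (MvPolynomial σ R) (MvPolynomial τ R)] {f : F}
    (hf : ∀ i, f (X i) ∈ idealOfVars τ R) {p : MvPolynomial σ R} {k : ℕ}
    (hp : p ∈ idealOfVars σ R ^ k) : f p ∈ idealOfVars τ R ^ k := by
  have hle : (idealOfVars σ R).map f ≤ idealOfVars τ R := by
    rw [Ideal.map_span, Ideal.span_le]
    rintro _ ⟨_, ⟨i, rfl⟩, rfl⟩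
    exact hf i
  exact Ideal.pow_right_mono hle k (Ideal.map_pow f _ k ▸ Ideal.mem_map_of_mem f hp)

theorem X_mem_idealOfVars (i : σ) : X i ∈ idealOfVars σ R :=
  Ideal.subset_span (Set.mem_range_self i)

theorem mem_pow_idealOfVars_of_X_mul_mem {i : σ} {p : MvPolynomial σ R} {k : ℕ}
    (h : X i * p ∈ idealOfVars σ R ^ (k + 1)) : p ∈ idealOfVars σ R ^ k := by
  rw [mem_pow_idealOfVars_iff'] at h ⊢
  intro d hd
  have := h (d + Finsupp.single i 1) (by simpa [Finsupp.degree_single] using hd)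
  rwa [mul_comm, coeff_mul_X] at this

theorem mem_pow_idealOfVars_of_X_add_C_mul_mem {i : σ} {u : R} (hu : IsUnit u)
    {p : MvPolynomial σ R} {k : ℕ} (h : (X i + C u) * p ∈ idealOfVars σ R ^ k) :
    p ∈ idealOfVars σ R ^ k := by
  let mk := Ideal.Quotient.mk (idealOfVars σ R ^ k)
  have hX : IsNilpotent (mk (X i)) :=
    ⟨k, by
      rw [← map_pow, Ideal.Quotient.eq_zero_iff_mem]
      exact Ideal.pow_mem_pow (X_mem_idealOfVars i) k⟩
  have hunit : IsUnit (mk (X i + C u)) := by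
    rw [map_add, add_comm]
    exact hX.isUnit_add_left_of_commute ((hu.map C).map mk) (Commute.all _ _)
  rw [← Ideal.Quotient.eq_zero_iff_mem, map_mul, hunit.mul_right_eq_zero] at h
  exact Ideal.Quotient.eq_zero_iff_mem.1 h

theorem rename_mem_pow_idealOfVars (f : σ → τ) {p : MvPolynomial σ R} {k : ℕ}
    (hp : p ∈ idealOfVars σ R ^ k) : rename f p ∈ idealOfVars τ R ^ k :=
  map_mem_pow_idealOfVars (f := rename f) (fun i => by simpa using X_mem_idealOfVars (f i)) hp

theorem totalDegree_X_le (i : σ) : (X i : MvPolynomial σ R).totalDegree ≤ 1 := by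
  simpa [X] using totalDegree_monomial_le (Finsupp.single i 1) (1 : R)

theorem le_totalDegree_X_sub_C_mul {p : MvPolynomial σ R} (hp : p ≠ 0) (i : σ) (c : R) :
    p.totalDegree + 1 ≤ ((X i - C c) * p).totalDegree := by
  obtain ⟨d, hd, hdeg⟩ : ∃ d ∈ p.support, p.totalDegree = d.degree :=
    Finset.exists_mem_eq_sup _ (support_nonempty.2 hp) _
  have hdeg' : (d + Finsupp.single i 1).degree = p.totalDegree + 1 := by
    rw [map_add, Finsupp.degree_single, hdeg]
  have htop : coeff (d + Finsupp.single i 1) p = 0 :=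
    coeff_eq_zero_of_totalDegree_lt (by change _ < Finsupp.degree _; omega)
  have hcoeff : coeff (d + Finsupp.single i 1) ((X i - C c) * p) = coeff d p := by
    rw [sub_mul, coeff_sub, coeff_C_mul, htop, mul_zero, sub_zero, mul_comm, coeff_mul_X]
  rw [← hdeg']
  exact le_totalDegree (mem_support_iff.2 (hcoeff ▸ mem_support_iff.1 hd))

theorem totalDegree_aeval_le {f : σ → MvPolynomial τ R} (hf : ∀ i, (f i).totalDegree ≤ 1)
    (p : MvPolynomial σ R) : (aeval f p).totalDegree ≤ p.totalDegree := by
  conv_lhs => rw [p.as_sum, map_sum]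
  refine totalDegree_finsetSum_le fun d hd => ?_
  rw [aeval_monomial, algebraMap_eq]
  calc (C (coeff d p) * d.prod fun i k => f i ^ k : MvPolynomial τ R).totalDegree
      ≤ ∑ i ∈ d.support, (f i ^ d i).totalDegree := by
        refine (totalDegree_mul _ _).trans ?_
        rw [totalDegree_C, zero_add]
        exact totalDegree_finsetProd _ _
    _ ≤ ∑ i ∈ d.support, d i :=
        Finset.sum_le_sum fun i _ =>
          (totalDegree_pow _ _).trans (by simpa using Nat.mul_le_mul_left (d i) (hf i))
    _ ≤ p.totalDegree := le_totalDegree hd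

noncomputable def recenter (a : σ → R) : MvPolynomial σ R →ₐ[R] MvPolynomial σ R :=
  bind₁ fun i => X i + C (a i)

@[simp]
theorem recenter_X (a : σ → R) (i : σ) : recenter a (X i) = X i + C (a i) :=
  bind₁_X_right _ _

theorem recenter_zero : recenter (0 : σ → R) = AlgHom.id R _ :=
  algHom_ext fun i => by simp

theorem recenter_rename (f : σ → τ) (a : τ → R) (p : MvPolynomial σ R) :
    recenter a (rename f p) = rename f (recenter (a ∘ f) p) := by
  rw [← AlgHom.comp_apply, ← AlgHom.comp_apply]
  congr 1
  exact algHom_ext fun i => by simp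

variable {m : ℕ}

noncomputable def substFirst (c : R) :
    MvPolynomial (Fin (m + 1)) R →ₐ[R] MvPolynomial (Fin m) R :=
  aeval (Fin.cons (C c) X)

@[simp]
theorem substFirst_X_zero (c : R) :
    substFirst c (X 0 : MvPolynomial (Fin (m + 1)) R) = C c := by
  simp [substFirst]

@[simp]
theorem substFirst_X_succ (c : R) (j : Fin m) : substFirst c (X j.succ) = X j := by
  simp [substFirst]

@[simp]
theorem substFirst_rename_succ (c : R) (p : MvPolynomial (Fin m) R) :
    substFirst c (rename Fin.succ p) = p := by
  rw [← AlgHom.comp_apply, ← AlgHom.id_apply (R := R) p]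
  congr 1
  exact algHom_ext fun j => by simp

theorem recenter_substFirst (c : R) (b : Fin m → R) (p : MvPolynomial (Fin (m + 1)) R) :
    recenter b (substFirst c p) = substFirst 0 (recenter (Fin.cons c b) p) := by
  rw [← AlgHom.comp_apply, ← AlgHom.comp_apply]
  congr 1
  refine algHom_ext fun i => Fin.cases ?_ (fun j => ?_) i <;> simp

theorem totalDegree_substFirst_le (c : R) (p : MvPolynomial (Fin (m + 1)) R) :
    (substFirst c p).totalDegree ≤ p.totalDegree :=
  totalDegree_aeval_le
    (fun i => Fin.cases (by simp) (fun j => by simpa using totalDegree_X_le j) i) p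

theorem X_sub_C_dvd_sub_rename_substFirst (c : R) (p : MvPolynomial (Fin (m + 1)) R) :
    X 0 - C c ∣ p - rename Fin.succ (substFirst c p) := by
  let I := Ideal.span {(X 0 - C c : MvPolynomial (Fin (m + 1)) R)}
  have hcomp : (Ideal.Quotient.mkₐ R I).comp ((rename Fin.succ).comp (substFirst c)) =
      Ideal.Quotient.mkₐ R I := by
    refine algHom_ext fun i => Fin.cases ?_ (fun j => ?_) i
    · have : C c - X 0 ∈ I := by
        rw [← neg_sub]; exact I.neg_mem (Ideal.mem_span_singleton_self _)
      simpa [Ideal.Quotient.mkₐ_eq_mk, Ideal.Quotient.mk_eq_mk_iff_sub_mem] using this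
    · simp
  rw [← Ideal.mem_span_singleton, ← Ideal.Quotient.mk_eq_mk_iff_sub_mem]
  exact (AlgHom.congr_fun hcomp p).symm

theorem substFirst_zero_mem_pow_idealOfVars {p : MvPolynomial (Fin (m + 1)) R} {k : ℕ}
    (hp : p ∈ idealOfVars (Fin (m + 1)) R ^ k) : substFirst 0 p ∈ idealOfVars (Fin m) R ^ k :=
  map_mem_pow_idealOfVars (f := substFirst (0 : R))
    (fun i => Fin.cases (by simp) (fun j => by simpa using X_mem_idealOfVars j) i) hp

end MvPolynomial

section Multiplicity

variable {n m : ℕ} {R : Type*} [CommRing R] {k : ℕ}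

theorem hasZeroOfMultAtLeast_iff {P : MvPolynomial (Fin n) R} {a : Fin n → R} :
    hasZeroOfMultAtLeast P a k ↔ recenter a P ∈ idealOfVars (Fin n) R ^ k := by
  simp only [mem_pow_idealOfVars_iff, Finsupp.degree_eq_sum]
  rfl

theorem hasZeroOfMultAtLeast_zero_iff {P : MvPolynomial (Fin n) R} :
    hasZeroOfMultAtLeast P 0 k ↔ P ∈ idealOfVars (Fin n) R ^ k := by
  rw [hasZeroOfMultAtLeast_iff, recenter_zero, AlgHom.id_apply]

namespace hasZeroOfMultAtLeast

variable {P Q : MvPolynomial (Fin n) R} {a : Fin n → R}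

theorem add (hP : hasZeroOfMultAtLeast P a k) (hQ : hasZeroOfMultAtLeast Q a k) :
    hasZeroOfMultAtLeast (P + Q) a k := by
  rw [hasZeroOfMultAtLeast_iff, map_add]
  exact Ideal.add_mem _ (hasZeroOfMultAtLeast_iff.1 hP) (hasZeroOfMultAtLeast_iff.1 hQ)

theorem sub (hP : hasZeroOfMultAtLeast P a k) (hQ : hasZeroOfMultAtLeast Q a k) :
    hasZeroOfMultAtLeast (P - Q) a k := by
  rw [hasZeroOfMultAtLeast_iff, map_sub]
  exact Ideal.sub_mem _ (hasZeroOfMultAtLeast_iff.1 hP) (hasZeroOfMultAtLeast_iff.1 hQ)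

theorem mul_left (hP : hasZeroOfMultAtLeast P a k) (Q : MvPolynomial (Fin n) R) :
    hasZeroOfMultAtLeast (Q * P) a k := by
  rw [hasZeroOfMultAtLeast_iff, map_mul]
  exact Ideal.mul_mem_left _ _ (hasZeroOfMultAtLeast_iff.1 hP)

theorem mono {j : ℕ} (h : hasZeroOfMultAtLeast P a k) (hjk : j ≤ k) :
    hasZeroOfMultAtLeast P a j :=
  fun d hd => hjk.trans (h d hd)

theorem rename {A : MvPolynomial (Fin m) R} (f : Fin m → Fin n)
    (h : hasZeroOfMultAtLeast A (a ∘ f) k) : hasZeroOfMultAtLeast (rename f A) a k := by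
  rw [hasZeroOfMultAtLeast_iff, recenter_rename]
  exact rename_mem_pow_idealOfVars f (hasZeroOfMultAtLeast_iff.1 h)

theorem substFirst {P : MvPolynomial (Fin (m + 1)) R} {c : R} {b : Fin m → R}
    (h : hasZeroOfMultAtLeast P (Fin.cons c b) k) :
    hasZeroOfMultAtLeast (substFirst c P) b k := by
  rw [hasZeroOfMultAtLeast_iff, recenter_substFirst]
  exact substFirst_zero_mem_pow_idealOfVars (hasZeroOfMultAtLeast_iff.1 h)

theorem of_X_mul_X_sub_one_mul {S : MvPolynomial (Fin (m + 1)) R} {c : R} (hc : c = 0 ∨ c = 1)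
    {b : Fin m → R} (h : hasZeroOfMultAtLeast (X 0 * (X 0 - 1) * S) (Fin.cons c b) (k + 1)) :
    hasZeroOfMultAtLeast S (Fin.cons c b) k := by
  rw [hasZeroOfMultAtLeast_iff] at h ⊢
  obtain ⟨u, hu, hfac⟩ : ∃ u : R, IsUnit u ∧ recenter (Fin.cons c b) (X 0 * (X 0 - 1) * S) =
      X 0 * ((X 0 + C u) * recenter (Fin.cons c b) S) := by
    rcases hc with rfl | rfl
    · refine ⟨-1, isUnit_one.neg, ?_⟩
      simp only [map_mul, map_sub, map_one, recenter_X, Fin.cons_zero, C_0, add_zero, C_neg]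
      ring
    · refine ⟨1, isUnit_one, ?_⟩
      simp only [map_mul, map_sub, map_one, recenter_X, Fin.cons_zero, add_sub_cancel_right]
      ring
  rw [hfac] at h
  exact mem_pow_idealOfVars_of_X_add_C_mul_mem hu (mem_pow_idealOfVars_of_X_mul_mem h)

end hasZeroOfMultAtLeast

end Multiplicity

section Cube

variable {n m : ℕ} {R : Type*} [CommRing R] {k : ℕ}

def VanishesOnPuncturedCube (P : MvPolynomial (Fin n) R) (k : ℕ) : Prop :=
  ∀ a : Fin n → R, (∀ i, a i = 0 ∨ a i = 1) → a ≠ 0 → hasZeroOfMultAtLeast P a k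

theorem cons_eq_zero_or_eq_one {c : R} (hc : c = 0 ∨ c = 1) {b : Fin m → R}
    (hb : ∀ i, b i = 0 ∨ b i = 1) (i : Fin (m + 1)) :
    (Fin.cons c b : Fin (m + 1) → R) i = 0 ∨ (Fin.cons c b : Fin (m + 1) → R) i = 1 :=
  Fin.cases hc hb i

variable {P : MvPolynomial (Fin (m + 1)) R}

theorem VanishesOnPuncturedCube.substFirst_sub (h : VanishesOnPuncturedCube P k) :
    VanishesOnPuncturedCube (substFirst 1 P - substFirst 0 P) k := fun _ hb hb0 =>
  (h _ (cons_eq_zero_or_eq_one (Or.inr rfl) hb)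
      (Matrix.cons_nonzero_iff.2 (Or.inr hb0))).substFirst.sub
    (h _ (cons_eq_zero_or_eq_one (Or.inl rfl) hb)
      (Matrix.cons_nonzero_iff.2 (Or.inr hb0))).substFirst

theorem substFirst_sub_mem_pow (h1 : hasZeroOfMultAtLeast P (Fin.cons 1 0) k)
    (h0 : P ∈ idealOfVars (Fin (m + 1)) R ^ k) :
    substFirst 1 P - substFirst 0 P ∈ idealOfVars (Fin m) R ^ k :=
  Ideal.sub_mem _ (hasZeroOfMultAtLeast_zero_iff.1 h1.substFirst)
    (substFirst_zero_mem_pow_idealOfVars h0)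

theorem substFirst_sub_not_mem_pow (h1 : hasZeroOfMultAtLeast P (Fin.cons 1 0) k)
    (hP : P ∉ idealOfVars (Fin (m + 1)) R ^ k ⊔ Ideal.span {X 0}) :
    substFirst 1 P - substFirst 0 P ∉ idealOfVars (Fin m) R ^ k := by
  intro hG
  have hA : substFirst 0 P ∈ idealOfVars (Fin m) R ^ k := by
    simpa using Ideal.sub_mem _ (hasZeroOfMultAtLeast_zero_iff.1 h1.substFirst) hG
  apply hP
  rw [← add_sub_cancel (rename Fin.succ (substFirst 0 P)) P]
  refine Submodule.add_mem_sup (rename_mem_pow_idealOfVars _ hA) (Ideal.mem_span_singleton.2 ?_)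
  simpa using X_sub_C_dvd_sub_rename_substFirst (0 : R) P

theorem totalDegree_substFirst_sub_add_one_le (h : substFirst 1 P - substFirst 0 P ≠ 0) :
    (substFirst 1 P - substFirst 0 P).totalDegree + 1 ≤ P.totalDegree := by
  obtain ⟨Q, hQ⟩ := X_sub_C_dvd_sub_rename_substFirst (0 : R) P
  have hG : substFirst 1 P - substFirst 0 P = substFirst 1 Q := by
    simpa using congrArg (substFirst 1) hQ
  rw [hG] at h ⊢
  have hQ0 : Q ≠ 0 := by rintro rfl; simp at h
  calc (substFirst 1 Q).totalDegree + 1 ≤ Q.totalDegree + 1 :=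
        Nat.add_le_add_right (totalDegree_substFirst_le _ _) 1
    _ ≤ ((X 0 - C 0) * Q).totalDegree := le_totalDegree_X_sub_C_mul hQ0 _ _
    _ = (P - rename Fin.succ (substFirst 0 P)).totalDegree := by rw [hQ]
    _ ≤ P.totalDegree := (totalDegree_sub _ _).trans
        (max_le le_rfl ((totalDegree_rename_le _ _).trans (totalDegree_substFirst_le _ _)))

theorem substFirst_zero_mem_pow_of_mem_sup
    (h : P ∈ idealOfVars (Fin (m + 1)) R ^ k ⊔ Ideal.span {X 0}) :
    substFirst 0 P ∈ idealOfVars (Fin m) R ^ k := by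
  obtain ⟨y, hy, z, hz, rfl⟩ := Submodule.mem_sup.1 h
  obtain ⟨w, rfl⟩ := Ideal.mem_span_singleton.1 hz
  simpa using substFirst_zero_mem_pow_idealOfVars hy

noncomputable def interpolateFirst (P : MvPolynomial (Fin (m + 1)) R) :
    MvPolynomial (Fin (m + 1)) R :=
  rename Fin.succ (substFirst 0 P) + X 0 * rename Fin.succ (substFirst 1 P - substFirst 0 P)

theorem X_mul_X_sub_one_dvd_sub_interpolateFirst (P : MvPolynomial (Fin (m + 1)) R) :
    X 0 * (X 0 - 1) ∣ P - interpolateFirst P := by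
  obtain ⟨Q, hQ⟩ := X_sub_C_dvd_sub_rename_substFirst (0 : R) (P - interpolateFirst P)
  have h0 : substFirst 0 (P - interpolateFirst P) = 0 := by simp [interpolateFirst]
  rw [h0, map_zero, sub_zero, map_zero, sub_zero] at hQ
  have h1 : substFirst 1 Q = 0 := by
    simpa [interpolateFirst, eq_comm] using congrArg (substFirst 1) hQ
  obtain ⟨S, hS⟩ := X_sub_C_dvd_sub_rename_substFirst (1 : R) Q
  rw [h1, map_zero, sub_zero, map_one] at hS
  exact ⟨S, by rw [hQ, hS, mul_assoc]⟩

theorem totalDegree_interpolateFirst_le :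
    (interpolateFirst P).totalDegree ≤ P.totalDegree := by
  refine (totalDegree_add _ _).trans
    (max_le ((totalDegree_rename_le _ _).trans (totalDegree_substFirst_le _ _)) ?_)
  by_cases hG : substFirst 1 P - substFirst 0 P = 0
  · simp [hG]
  · have := totalDegree_substFirst_sub_add_one_le hG
    have := totalDegree_rename_le Fin.succ (substFirst 1 P - substFirst 0 P)
    have := totalDegree_X_le (R := R) (0 : Fin (m + 1))
    exact (totalDegree_mul _ _).trans (by omega)

theorem hasZeroOfMultAtLeast_interpolateFirst {a : Fin (m + 1) → R}
    (hA : hasZeroOfMultAtLeast (substFirst 0 P) (Fin.tail a) k)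
    (hB : hasZeroOfMultAtLeast (substFirst 1 P) (Fin.tail a) k) :
    hasZeroOfMultAtLeast (interpolateFirst P) a k :=
  (hA.rename Fin.succ).add (((hB.sub hA).rename Fin.succ).mul_left (X 0))

end Cube

section Induction

variable {m : ℕ} {R : Type*} [CommRing R] [Nontrivial R] {k : ℕ}

theorem hasZeroOfMultAtLeast_interpolateFirst_of_mem_sup {P : MvPolynomial (Fin (m + 1)) R}
    (h : VanishesOnPuncturedCube P k)
    (hP : P ∈ idealOfVars (Fin (m + 1)) R ^ k ⊔ Ideal.span {X 0})
    (a : Fin (m + 1) → R) (ha : ∀ i, a i = 0 ∨ a i = 1) :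
    hasZeroOfMultAtLeast (interpolateFirst P) a k := by
  have htail : ∀ i, Fin.tail a i = 0 ∨ Fin.tail a i = 1 := fun i => ha i.succ
  have hB := h _ (cons_eq_zero_or_eq_one (Or.inr rfl) htail)
    (Matrix.cons_nonzero_iff.2 (Or.inl one_ne_zero))
  refine hasZeroOfMultAtLeast_interpolateFirst ?_ hB.substFirst
  by_cases ht : Fin.tail a = 0
  · rw [ht, hasZeroOfMultAtLeast_zero_iff]
    exact substFirst_zero_mem_pow_of_mem_sup hP
  · exact (h _ (cons_eq_zero_or_eq_one (Or.inl rfl) htail)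
      (Matrix.cons_nonzero_iff.2 (Or.inr ht))).substFirst

theorem exists_lower_order_of_mem_sup_span_X {P : MvPolynomial (Fin (m + 1)) R}
    (hcube : VanishesOnPuncturedCube P (k + 2))
    (h0 : P ∈ idealOfVars (Fin (m + 1)) R ^ (k + 1))
    (h0' : P ∉ idealOfVars (Fin (m + 1)) R ^ (k + 2))
    (hP : P ∈ idealOfVars (Fin (m + 1)) R ^ (k + 2) ⊔ Ideal.span {X 0}) :
    ∃ S : MvPolynomial (Fin (m + 1)) R, VanishesOnPuncturedCube S (k + 1) ∧
      S ∈ idealOfVars (Fin (m + 1)) R ^ k ∧ S ∉ idealOfVars (Fin (m + 1)) R ^ (k + 1) ∧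
      S.totalDegree + 2 ≤ P.totalDegree := by
  have hI := hasZeroOfMultAtLeast_interpolateFirst_of_mem_sup hcube hP
  have hI0 : interpolateFirst P ∈ idealOfVars (Fin (m + 1)) R ^ (k + 2) :=
    hasZeroOfMultAtLeast_zero_iff.1 (hI 0 fun _ => Or.inl rfl)
  obtain ⟨S, hS⟩ := X_mul_X_sub_one_dvd_sub_interpolateFirst P
  have hS' : S ∉ idealOfVars (Fin (m + 1)) R ^ (k + 1) := by
    intro hS'
    refine h0' (sub_add_cancel P (interpolateFirst P) ▸ Ideal.add_mem _ ?_ hI0)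
    rw [hS, pow_succ']
    exact Ideal.mul_mem_mul (Ideal.mul_mem_right _ _ (X_mem_idealOfVars 0)) hS'
  refine ⟨S, fun a ha ha0 => ?_, ?_, hS', ?_⟩
  · rw [← Fin.cons_self_tail a]
    refine hasZeroOfMultAtLeast.of_X_mul_X_sub_one_mul (ha 0) ?_
    rw [← hS, Fin.cons_self_tail]
    exact (hcube a ha ha0).sub (hI a ha)
  · have hc0 : (Fin.cons 0 0 : Fin (m + 1) → R) = 0 := Matrix.cons_zero_zero
    have : hasZeroOfMultAtLeast (X 0 * (X 0 - 1) * S) (Fin.cons 0 0) (k + 1) := by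
      rw [← hS, hc0, hasZeroOfMultAtLeast_zero_iff]
      exact Ideal.sub_mem _ h0 (Ideal.pow_le_pow_right (Nat.le_succ _) hI0)
    rw [← hasZeroOfMultAtLeast_zero_iff, ← hc0]
    exact this.of_X_mul_X_sub_one_mul (Or.inl rfl)
  · have hS0 : S ≠ 0 := by rintro rfl; exact hS' (Ideal.zero_mem _)
    have h1 := le_totalDegree_X_sub_C_mul hS0 0 1
    have h2 := le_totalDegree_X_sub_C_mul (p := (X 0 - C 1) * S)
      (fun h => by rw [h, totalDegree_zero] at h1; omega) 0 0
    calc S.totalDegree + 2 ≤ ((X 0 - C 0) * ((X 0 - C 1) * S)).totalDegree := by omega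
      _ = (P - interpolateFirst P).totalDegree := by rw [hS]; simp [mul_assoc]
      _ ≤ P.totalDegree :=
        (totalDegree_sub _ _).trans (max_le le_rfl totalDegree_interpolateFirst_le)

theorem add_two_mul_le_totalDegree : ∀ {m k : ℕ} {P : MvPolynomial (Fin m) R},
    VanishesOnPuncturedCube P (k + 1) → P ∈ idealOfVars (Fin m) R ^ k →
    P ∉ idealOfVars (Fin m) R ^ (k + 1) → m + 2 * k ≤ P.totalDegree
  | 0, k, P, _, h0, h0' => by
    obtain ⟨d, hd, hdk⟩ := not_forall₂.1 (mt (mem_pow_idealOfVars_iff _ P).2 h0')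
    have := (mem_pow_idealOfVars_iff k P).1 h0 d hd
    rw [Subsingleton.elim d 0, map_zero] at this hdk
    omega
  | m + 1, k, P, hcube, h0, h0' => by
    have h1 : hasZeroOfMultAtLeast P (Fin.cons 1 0) (k + 1) :=
      hcube _ (cons_eq_zero_or_eq_one (Or.inr rfl) fun _ => Or.inl rfl)
        (Matrix.cons_nonzero_iff.2 (Or.inl one_ne_zero))
    -- `hP` says that every monomial of degree `k` of `P` contains `x₀`.
    by_cases hP : P ∈ idealOfVars (Fin (m + 1)) R ^ (k + 1) ⊔ Ideal.span {X 0}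
    · obtain ⟨j, rfl⟩ : ∃ j, k = j + 1 := Nat.exists_eq_succ_of_ne_zero fun hk => h0' <| by
        have hX : Ideal.span {X 0} ≤ idealOfVars (Fin (m + 1)) R :=
          Ideal.span_le.2 (Set.singleton_subset_iff.2 (X_mem_idealOfVars 0))
        simpa [hk, sup_eq_left.2 hX] using hP
      obtain ⟨S, hS, hS0, hS0', hdeg⟩ := exists_lower_order_of_mem_sup_span_X hcube h0 h0' hP
      have := add_two_mul_le_totalDegree hS hS0 hS0'
      omega
    · have hG := substFirst_sub_not_mem_pow h1 hP
      have := add_two_mul_le_totalDegree hcube.substFirst_sub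
        (substFirst_sub_mem_pow (h1.mono k.le_succ) h0) hG
      have := totalDegree_substFirst_sub_add_one_le fun h => hG (h ▸ Ideal.zero_mem _)
      omega
termination_by m k => m + k

end Induction

theorem lower_bound_mult_exactly_k_sub_one_general (k n : ℕ)
    (P : MvPolynomial (Fin n) ℝ)
    (hvan : ∀ a : Fin n → ℝ, (∀ i, a i = 0 ∨ a i = 1) → a ≠ 0 →
      hasZeroOfMultAtLeast P a k)
    (h0 : hasZeroOfMultAtLeast P (0 : Fin n → ℝ) (k - 1))
    (h0' : ¬ hasZeroOfMultAtLeast P (0 : Fin n → ℝ) k) :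
    n + 2 * k - 2 ≤ P.totalDegree := by
  rw [hasZeroOfMultAtLeast_zero_iff] at h0 h0'
  obtain ⟨j, rfl⟩ : ∃ j, k = j + 1 :=
    Nat.exists_eq_succ_of_ne_zero fun hk => h0' (by simp [hk])
  have := add_two_mul_le_totalDegree hvan (by simpa using h0) h0'
  omega

theorem lower_bound_mult_exactly_k_sub_one (k n : ℕ) (hk : 2 ≤ k) (hn : 1 ≤ n)
    (P : MvPolynomial (Fin n) ℝ)
    (hvan : ∀ a : Fin n → ℝ, (∀ i, a i = 0 ∨ a i = 1) → a ≠ 0 →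
      hasZeroOfMultAtLeast P a k)
    (h0 : hasZeroOfMultAtLeast P (0 : Fin n → ℝ) (k - 1))
    (h0' : ¬ hasZeroOfMultAtLeast P (0 : Fin n → ℝ) k) :
    n + 2 * k - 2 ≤ P.totalDegree :=
  lower_bound_mult_exactly_k_sub_one_general k n P hvan h0 h0'
end

section
/- Let k ≥ 2 and n ≥ 1. The number of monomials x_1^{e_1}···x_n^{e_n} of total degree at most n+2k-3 that are not divisible by any product of k squares of variables (i.e., not divisible by x_{i_1}^2 ··· x_{i_k}^2 for any, not necessarily distinct, indices i_1,...,i_k) equals (2^n − 1) · M_k(n) + M_{k-1}(n), where M_t(n) denotes the number of n-tuples of non-negative integers summing to less than t. -/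
/-- `M t n`: the number of `n`-tuples of non-negative integers with sum less than `t`. -/
noncomputable def Mnum (n t : ℕ) : ℕ := Nat.card {f : Fin n → ℕ // ∑ i, f i < t}

/-!
Write each exponent as `e i = 2 * m i + r i` with `r i ∈ {0, 1}`. Not being divisible by a
product of `k` squares means `∑ m i < k`, and then the degree `2 * ∑ m i + ∑ r i` is at most
`n + 2k - 2`, with equality only when `r = 1` and `∑ m i = k - 1`. So each parity pattern `r`
contributes `M_k(n)` vectors `m`, except `r = 1`, which contributes `M_{k-1}(n)`.
-/

open Finset

theorem exists_le_sum_eq {ι : Type*} (s : Finset ι) (g : ι → ℕ) {k : ℕ}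
    (hk : k ≤ ∑ i ∈ s, g i) : ∃ f ≤ g, ∑ i ∈ s, f i = k := by
  classical
  induction k with
  | zero => exact ⟨0, fun _ => Nat.zero_le _, by simp⟩
  | succ k ih =>
    obtain ⟨f, hfg, hf⟩ := ih (by omega)
    obtain ⟨i, hi, hlt⟩ := exists_lt_of_sum_lt (hf ▸ hk : ∑ j ∈ s, f j < ∑ j ∈ s, g j)
    refine ⟨f + Pi.single i 1, fun j => ?_, ?_⟩
    · rcases eq_or_ne j i with rfl | hj
      · simpa using hlt
      · simpa [hj] using hfg j
    · simp only [Pi.add_apply]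
      rw [sum_add_distrib, sum_pi_single', if_pos hi, hf]

theorem not_exists_two_mul_le_iff {ι : Type*} [Fintype ι] (k : ℕ) (d : ι → ℕ) :
    (¬ ∃ f : ι → ℕ, ∑ i, f i = k ∧ ∀ i, 2 * f i ≤ d i) ↔ ∑ i, d i / 2 < k := by
  rw [← not_le, not_iff_not]
  constructor
  · rintro ⟨f, rfl, hf⟩
    exact sum_le_sum fun i _ => (Nat.le_div_iff_mul_le two_pos).2 (by linarith [hf i])
  · intro hk
    obtain ⟨f, hf, rfl⟩ := exists_le_sum_eq univ (fun i => d i / 2) hk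
    exact ⟨f, rfl, fun i => by have := hf i; simp only at this; omega⟩

theorem sum_fin_two_val_le_card {ι : Type*} [Fintype ι] (r : ι → Fin 2) :
    ∑ i, (r i : ℕ) ≤ Fintype.card ι := by
  simpa using sum_le_sum fun i (_ : i ∈ univ) => Nat.le_of_lt_succ (r i).isLt

theorem sum_fin_two_val_eq_card_iff {ι : Type*} [Fintype ι] (r : ι → Fin 2) :
    ∑ i, (r i : ℕ) = Fintype.card ι ↔ r = 1 := by
  rw [← card_univ, card_eq_sum_ones,
    sum_eq_sum_iff_of_le fun i _ => Nat.le_of_lt_succ (r i).isLt, funext_iff]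
  simp [Fin.ext_iff]

theorem finite_sum_lt (ι : Type*) [Fintype ι] (t : ℕ) :
    {f : ι → ℕ | ∑ i, f i < t}.Finite := by
  classical
  exact (Set.finite_Iic fun _ => t).subset fun _ hf i =>
    (single_le_sum (fun _ _ => Nat.zero_le _) (mem_univ i)).trans hf.le

theorem sum_ite_eq_add_card_sub_one_mul {α : Type*} [Fintype α] [DecidableEq α] (a : α)
    (x y : ℕ) : ∑ b, (if b = a then x else y) = x + (Fintype.card α - 1) * y := by
  rw [Fintype.sum_eq_add_sum_compl a, if_pos rfl,
    sum_congr rfl fun b hb => if_neg (by simpa using hb)]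
  simp [card_compl]

def parityHalfEquiv (ι : Type*) : (ι → ℕ) ≃ (ι → Fin 2) × (ι → ℕ) :=
  (Equiv.piCongrRight fun _ => (Nat.divModEquiv 2).trans (Equiv.prodComm _ _)).trans
    (Equiv.arrowProdEquivProdArrow _ _ _)

theorem degree_le_and_sum_half_lt_iff {ι : Type*} [Fintype ι] {k : ℕ} (hk : 2 ≤ k)
    (r : ι → Fin 2) (m : ι → ℕ) :
    (∑ i, (m i * 2 + r i) ≤ Fintype.card ι + 2 * k - 3 ∧ ∑ i, (m i * 2 + r i) / 2 < k) ↔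
      ∑ i, m i < k ∧ ¬(r = 1 ∧ ∑ i, m i = k - 1) := by
  have hhalf : ∑ i, (m i * 2 + r i) / 2 = ∑ i, m i :=
    sum_congr rfl fun i _ => by have := (r i).isLt; omega
  rw [hhalf, sum_add_distrib, ← sum_mul, ← sum_fin_two_val_eq_card_iff]
  have := sum_fin_two_val_le_card r
  omega

theorem card_halves_with_parity (n k : ℕ) (r : Fin n → Fin 2) :
    Nat.card {m : Fin n → ℕ // ∑ i, m i < k ∧ ¬(r = 1 ∧ ∑ i, m i = k - 1)} =
      if r = 1 then Mnum n (k - 1) else Mnum n k := by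
  unfold Mnum
  split_ifs with hr
  · exact Nat.card_congr (Equiv.subtypeEquivRight fun m => by simp only [hr, true_and]; omega)
  · exact Nat.card_congr (Equiv.subtypeEquivRight fun m => by simp [hr])

theorem count_reduced_monomials_general (k n : ℕ) (hk : 2 ≤ k) :
    Nat.card {d : Fin n → ℕ //
      (∑ i, d i ≤ n + 2 * k - 3) ∧
      ¬ ∃ f : Fin n → ℕ, (∑ i, f i) = k ∧ ∀ i, 2 * f i ≤ d i}
    = (2 ^ n - 1) * Mnum n k + Mnum n (k - 1) := by
  set P : (Fin n → Fin 2) → (Fin n → ℕ) → Prop :=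
    fun r m => ∑ i, m i < k ∧ ¬(r = 1 ∧ ∑ i, m i = k - 1)
  have : ∀ r, Finite {m // P r m} :=
    fun r => ((finite_sum_lt _ k).subset fun _ hm => hm.1).to_subtype
  calc _ = Nat.card {p : (Fin n → Fin 2) × (Fin n → ℕ) // P p.1 p.2} := by
        refine Nat.card_congr (Equiv.subtypeEquiv (parityHalfEquiv _).symm fun p => ?_).symm
        rw [not_exists_two_mul_le_iff]
        have h := (degree_le_and_sum_half_lt_iff hk p.1 p.2).symm
        rw [Fintype.card_fin] at h
        exact h
    _ = ∑ r, Nat.card {m // P r m} := by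
        rw [Nat.card_congr (Equiv.subtypeProdEquivSigmaSubtype P), Nat.card_sigma]
    _ = _ := by
        simp_rw [P, card_halves_with_parity, sum_ite_eq_add_card_sub_one_mul, Fintype.card_fun,
          Fintype.card_fin]
        ring

/-- The number of monomials of total degree at most `n + 2k - 3` that are not divisible
by a product of `k` squares of variables equals `(2^n - 1) * M_k(n) + M_{k-1}(n)`. -/
theorem count_reduced_monomials (k n : ℕ) (hk : 2 ≤ k) (hn : 1 ≤ n) :
    Nat.card {d : Fin n → ℕ //
      (∑ i, d i ≤ n + 2 * k - 3) ∧
      ¬ ∃ f : Fin n → ℕ, (∑ i, f i) = k ∧ ∀ i, 2 * f i ≤ d i}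
    = (2 ^ n - 1) * Mnum n k + Mnum n (k - 1) :=
  count_reduced_monomials_general k n hk
end

section
/- Let n ≥ 1 and let d_1, ..., d_t be positive integers with d_1 + ... + d_t ≤ n. When the symmetric polynomial sum over distinct indices i_1,...,i_t ∈ {1,...,n} of x_{i_1}^{d_1}···x_{i_t}^{d_t} is written as a polynomial in the power sums p_1,...,p_n (where p_m = x_1^m + ... + x_n^m), the coefficient of p_{d_1+...+d_t} equals t! · (-1)^{t-1}/t = (-1)^{t-1}(t-1)!. -/
/-!
Splitting off the first index of an injective tuple, the sums
`m̃_d = ∑_{i distinct} x_{i₁}^{d₁} ⋯ x_{i_t}^{d_t}` satisfy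
`m̃_d = p_{d₁} m̃_{(d₂,…,d_t)} - ∑_{k ≥ 2} m̃_{(d₂,…,d_k + d₁,…,d_t)}`: letting the new index run
over all values overcounts exactly its collisions with one of the others. The product term has no
part linear in `p_{d₁+⋯+d_t}`, and each of the `t - 1` correction terms has `t - 1` parts and the
same total degree, so by induction the coefficient is `-(t - 1)` times `(-1)^{t-2} (t-2)!`.

The expansion is unique because `p₁, …, pₙ` are algebraically independent in characteristic zero:
by Newton's identities `e₁, …, eₙ` lie in the algebra they generate, so substituting
`y_j ↦ p_{j+1}` and then inverting the fundamental theorem `K[y] ≃ K[x]^{Sₙ}` is a surjective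
endomorphism of the Noetherian ring `K[y]`, hence injective.
-/

open Finset

theorem IsNoetherianRing.injective_of_surjective_endomorphism {A : Type*} [Ring A]
    [IsNoetherianRing A] (f : A →+* A) (hf : Function.Surjective f) : Function.Injective f := by
  have hmono : Monotone fun m : ℕ => RingHom.ker (f ^ m) := fun m k hmk x hx => by
    rw [RingHom.mem_ker, ← Nat.sub_add_cancel hmk, pow_add, RingHom.coe_mul, Function.comp_apply,
      RingHom.mem_ker.mp hx, map_zero]
  obtain ⟨N, hN⟩ := monotone_stabilizes_iff_noetherian.mpr inferInstance ⟨_, hmono⟩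
  rw [injective_iff_map_eq_zero]
  intro x hx
  obtain ⟨y, rfl⟩ : ∃ y, (f ^ N) y = x := by simpa [RingHom.coe_pow] using hf.iterate N x
  have hy : y ∈ RingHom.ker (f ^ (N + 1)) := by
    rw [RingHom.mem_ker, pow_succ', RingHom.coe_mul, Function.comp_apply, hx]
  rwa [show RingHom.ker (f ^ (N + 1)) = RingHom.ker (f ^ N) from (hN _ N.le_succ).symm] at hy

theorem Function.Embedding.sum_subtype_notMem_range {ι κ M : Type*} [Fintype ι] [Fintype κ]
    [DecidableEq κ] [AddCommGroup M] (e : ι ↪ κ) [Fintype {i // i ∉ Set.range e}] (g : κ → M) :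
    ∑ i : {i // i ∉ Set.range e}, g i = ∑ i, g i - ∑ k, g (e k) := by
  rw [← Finset.sum_subtype (univ.map e)ᶜ (by simp), eq_sub_iff_add_eq, ← Finset.sum_map univ e,
    Finset.sum_compl_add_sum]

theorem Fintype.prod_pow_add_single {ι M : Type*} [Fintype ι] [DecidableEq ι] [CommMonoid M]
    (f : ι → M) (c : ι → ℕ) (k : ι) (m : ℕ) :
    ∏ j, f j ^ (c + Pi.single k m : ι → ℕ) j = f k ^ m * ∏ j, f j ^ c j := by
  rw [mul_comm]
  simp only [Pi.add_apply, pow_add, prod_mul_distrib]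
  congr 1
  rw [Fintype.prod_eq_single k fun j hj => by rw [Pi.single_eq_of_ne hj, pow_zero],
    Pi.single_eq_same]

theorem Fin.sum_tail_add_single {t : ℕ} (d : Fin (t + 1) → ℕ) (k : Fin t) :
    ∑ j, (Fin.tail d + Pi.single k (d 0) : Fin t → ℕ) j = ∑ j, d j := by
  simp [Finset.sum_add_distrib, Fin.sum_univ_succ, Fin.tail, add_comm]

namespace MvPolynomial

section AugmentedMonomial

variable (σ R : Type*) [Fintype σ] [CommRing R]

noncomputable def augmentedMonomial {t : ℕ} (d : Fin t → ℕ) : MvPolynomial σ R :=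
  ∑ e : Fin t ↪ σ, ∏ j, X (e j) ^ d j

theorem augmentedMonomial_succ {t : ℕ} (d : Fin (t + 1) → ℕ) :
    augmentedMonomial σ R d = psum σ R (d 0) * augmentedMonomial σ R (Fin.tail d) -
      ∑ k, augmentedMonomial σ R (Fin.tail d + Pi.single k (d 0)) := by
  classical
  have hsplit (e : Fin t ↪ σ) :
      ∑ i : {i // i ∉ Set.range e},
          ∏ j, (X (Fin.cons (α := fun _ => σ) i.1 e j) : MvPolynomial σ R) ^ d j =
        psum σ R (d 0) * ∏ j, X (e j) ^ Fin.tail d j -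
          ∑ k, ∏ j, X (e j) ^ (Fin.tail d + Pi.single k (d 0) : Fin t → ℕ) j := by
    simp only [Fin.prod_univ_succ, Fin.cons_zero, Fin.cons_succ, ← Finset.sum_mul]
    rw [e.sum_subtype_notMem_range fun i => (X i : MvPolynomial σ R) ^ d 0, psum]
    simp only [sub_mul, Finset.sum_mul, Fintype.prod_pow_add_single]
    rfl
  rw [augmentedMonomial, ← (Equiv.embeddingFinSucc t σ).symm.sum_comp, Fintype.sum_sigma]
  simp only [Equiv.coe_embeddingFinSucc_symm, hsplit, Finset.sum_sub_distrib, augmentedMonomial,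
    Finset.mul_sum]
  rw [Finset.sum_comm]

end AugmentedMonomial

section PowerSums

variable (R : Type*) [CommRing R] (n : ℕ)

noncomputable def psumAlgHom : MvPolynomial (Fin n) R →ₐ[R] MvPolynomial (Fin n) R :=
  aeval fun j => psum (Fin n) R (j + 1)

variable {R n}

theorem psumAlgHom_X_sub_one {m : ℕ} (h1 : 1 ≤ m) (h2 : m ≤ n) :
    psumAlgHom R n (X ⟨m - 1, by omega⟩) = psum (Fin n) R m := by
  rw [psumAlgHom, aeval_X, Nat.sub_add_cancel h1]

theorem exists_psumAlgHom_eq_augmentedMonomial {t : ℕ} (d : Fin (t + 1) → ℕ) (hd : ∀ j, 1 ≤ d j)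
    (hsum : ∑ j, d j ≤ n) :
    ∃ Q, psumAlgHom R n Q = augmentedMonomial (Fin n) R d ∧
      ∀ i : Fin n, (i : ℕ) + 1 = ∑ j, d j →
        Q.coeff (Finsupp.single i 1) = (-1) ^ t * t.factorial := by
  induction t with
  | zero =>
    have hsum_eq : ∑ j, d j = d 0 := Fin.sum_univ_one d
    have hd0 := hd 0
    refine ⟨X ⟨d 0 - 1, by omega⟩, ?_, fun i hi => ?_⟩
    · rw [psumAlgHom_X_sub_one hd0 (hsum_eq ▸ hsum), augmentedMonomial_succ]
      simp [augmentedMonomial]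
    · simp [coeff_X, show (⟨d 0 - 1, _⟩ : Fin n) = i from Fin.ext (by simp; omega)]
  | succ t ih =>
    have htail_pos : t + 1 ≤ ∑ j, Fin.tail d j := by
      simpa using Finset.card_nsmul_le_sum univ (Fin.tail d) 1 fun j _ => hd j.succ
    have htail : ∑ j, d j = d 0 + ∑ j, Fin.tail d j := Fin.sum_univ_succ d
    obtain ⟨Q₀, hQ₀, -⟩ := ih (Fin.tail d) (fun j => hd j.succ) (by omega)
    choose Q hQ hcoeff using fun k : Fin (t + 1) => ih (Fin.tail d + Pi.single k (d 0))
      (fun j => (hd j.succ).trans (Nat.le_add_right _ _))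
      (by rw [Fin.sum_tail_add_single]; exact hsum)
    have hd0 := hd 0
    refine ⟨X ⟨d 0 - 1, by omega⟩ * Q₀ - ∑ k, Q k, ?_, fun i hi => ?_⟩
    · rw [augmentedMonomial_succ _ _ d, map_sub, map_mul, map_sum,
        psumAlgHom_X_sub_one hd0 (by omega), hQ₀]
      simp only [hQ]
    · have hne : (⟨d 0 - 1, by omega⟩ : Fin n) ≠ i := fun h => by
        have := congrArg Fin.val h
        simp only at this
        omega
      rw [coeff_sub, coeff_X_mul', if_neg (by simpa using hne), coeff_sum]
      simp only [fun k => hcoeff k i (hi.trans (Fin.sum_tail_add_single d k).symm)]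
      rw [sum_const, card_univ, Fintype.card_fin, nsmul_eq_mul, zero_sub, Nat.factorial_succ]
      push_cast
      ring

end PowerSums

section CharZero

variable {K : Type*} [Field K] [CharZero K] {n : ℕ}

theorem esymm_mem_range_psumAlgHom {k : ℕ} (hk : k ≤ n) :
    esymm (Fin n) K k ∈ (psumAlgHom K n).range := by
  induction k using Nat.strong_induction_on with
  | _ k ih =>
  rcases k.eq_zero_or_pos with rfl | hk0
  · simp
  have hmul : (k : MvPolynomial (Fin n) K) * esymm (Fin n) K k ∈ (psumAlgHom K n).range := by
    rw [mul_esymm_eq_sum]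
    have hsign (m : ℕ) : (-1 : MvPolynomial (Fin n) K) ^ m ∈ (psumAlgHom K n).range :=
      Subalgebra.pow_mem _ (Subalgebra.neg_mem _ (Subalgebra.one_mem _)) m
    refine Subalgebra.mul_mem _ (hsign _) (Subalgebra.sum_mem _ fun a ha => ?_)
    rw [mem_filter, HasAntidiagonal.mem_antidiagonal] at ha
    exact Subalgebra.mul_mem _ (Subalgebra.mul_mem _ (hsign _) (ih a.1 ha.2 (by omega)))
      ⟨_, psumAlgHom_X_sub_one (m := a.2) (by omega) (by omega)⟩
  rw [← nsmul_eq_mul, ← Nat.cast_smul_eq_nsmul K] at hmul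
  simpa [hk0.ne'] using Subalgebra.smul_mem _ hmul (k : K)⁻¹

variable (K n) in
theorem psumAlgHom_injective : Function.Injective (psumAlgHom K n) := by
  have hsymm (p) : psumAlgHom K n p ∈ symmetricSubalgebra (Fin n) K :=
    ((aeval_range _).le.trans (Algebra.adjoin_le (Set.range_subset_iff.mpr fun j =>
      psum_isSymmetric _ _ _))) ⟨p, rfl⟩
  let E := esymmAlgEquiv (Fin n) K (Fintype.card_fin n)
  let f := E.symm.toAlgHom.comp ((psumAlgHom K n).codRestrict _ hsymm)
  have hf : Function.Surjective f := by
    intro q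
    obtain ⟨p, hp⟩ : (E q : MvPolynomial (Fin n) K) ∈ (psumAlgHom K n).range := by
      rw [esymmAlgEquiv_apply, esymmAlgHom_apply]
      refine ((aeval_range _).le.trans (Algebra.adjoin_le (Set.range_subset_iff.mpr fun j => ?_)))
        ⟨q, rfl⟩
      exact esymm_mem_range_psumAlgHom (by omega)
    exact ⟨p, E.symm_apply_eq.mpr (Subtype.ext hp)⟩
  exact fun a b h => IsNoetherianRing.injective_of_surjective_endomorphism f.toRingHom hf
    (congrArg E.symm (Subtype.ext h))

end CharZero

end MvPolynomial

open MvPolynomial in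
/-- When the symmetric polynomial `∑_{i₁,…,i_t distinct} x_{i₁}^{d₁} ⋯ x_{i_t}^{d_t}`
is written (uniquely) as a polynomial `Q` in the power sums `p₁, …, p_n`, the
coefficient of `p_{d₁+⋯+d_t}` equals `(-1)^{t-1} (t-1)!`. Here the variable `y_j`
(for `j : Fin n`) of `Q` stands for the power sum `p_{j+1}`. -/
theorem coeff_top_power_sum (n t : ℕ) (ht : 1 ≤ t) (d : Fin t → ℕ)
    (hd : ∀ j, 1 ≤ d j) (hsum : ∑ j, d j ≤ n)
    (Q : MvPolynomial (Fin n) ℝ)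
    (hQ : MvPolynomial.aeval (fun j : Fin n => ∑ i : Fin n, (X i : MvPolynomial (Fin n) ℝ) ^ ((j : ℕ) + 1)) Q
        = ∑ e : Fin t ↪ Fin n, ∏ j, (X (e j) : MvPolynomial (Fin n) ℝ) ^ d j) :
    Q.coeff (Finsupp.single ⟨(∑ j, d j) - 1, by
      have h1 := Finset.single_le_sum (f := d) (fun j _ => Nat.zero_le _)
        (Finset.mem_univ ⟨0, ht⟩)
      have h2 := hd ⟨0, ht⟩
      omega⟩ 1)
    = (-1 : ℝ) ^ (t - 1) * (t - 1).factorial := by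
  obtain ⟨s, rfl⟩ : ∃ s, t = s + 1 := ⟨t - 1, by omega⟩
  obtain ⟨Q', hQ', hcoeff⟩ := exists_psumAlgHom_eq_augmentedMonomial (R := ℝ) d hd hsum
  obtain rfl : Q = Q' := psumAlgHom_injective ℝ n (hQ.trans hQ'.symm)
  have hpos : 1 ≤ ∑ j, d j :=
    (hd 0).trans (single_le_sum (fun j _ => Nat.zero_le (d j)) (mem_univ 0))
  simpa using hcoeff _ (Nat.sub_add_cancel hpos)
end

section
/- Over the field 𝔽_2, for n ≥ 1 the polynomial P = (∏_{ℓ=1}^n (x_ℓ+1)) · (1 + Σ_i (x_i^3+x_i^2+x_i) + Σ_{i≠j} (x_i^3+x_i^2) x_j + Σ_{i<j} x_i x_j + Σ_{i<j<k} x_i x_j x_k) has degree at most n+4, satisfies P(0,...,0) ≠ 0, and has zeroes of multiplicity at least 4 at every point of 𝔽_2^n \ {(0,...,0)}. -/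
open MvPolynomial in
/-- The counterexample polynomial over `𝔽₂` for `k = 4`. -/
noncomputable def P17 (n : ℕ) : MvPolynomial (Fin n) (ZMod 2) :=
  (∏ l : Fin n, (X l + 1)) *
    (1 + (∑ i : Fin n, (X i ^ 3 + X i ^ 2 + X i))
       + (∑ p ∈ Finset.univ.filter (fun p : Fin n × Fin n => p.1 ≠ p.2),
            (X p.1 ^ 3 + X p.1 ^ 2) * X p.2)
       + (∑ p ∈ Finset.univ.filter (fun p : Fin n × Fin n => p.1 < p.2), X p.1 * X p.2)
       + (∑ p ∈ Finset.univ.filter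
            (fun p : Fin n × Fin n × Fin n => p.1 < p.2.1 ∧ p.2.1 < p.2.2),
            X p.1 * X p.2.1 * X p.2.2))

/-!
Write `eₖ` for the elementary symmetric polynomials and `𝔪ₐ = (Xᵢ - aᵢ)` for the ideal of the
point `a`; a zero of multiplicity `k` at `a` is membership in `𝔪ₐ ^ k`, since the substitution
`X ↦ X + a` carries `𝔪ₐ` to the ideal of the variables.

In characteristic two the Newton identity reads `p₃ = e₁³ + e₁e₂ + e₃`, and with it the second
factor of `P17 n` becomes `(1 + e₁) R`, `R = (1 + e₁)² + e₂(1 + e₁) + e₃`. Let `s ≥ 1` be the number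
of ones in `a`. Then `∏ (Xₗ + 1) ∈ 𝔪ₐ ^ s`, and `eₖ ∈ 𝔪ₐ ^ (k - s)` because each monomial of `eₖ`
contains at least `k - s` variables vanishing at `a`. Moreover `1 + e₁ ≡ 1 + s` modulo `𝔪ₐ`.
So for `s = 3` the factor `1 + e₁` suffices, for `s = 1` also `R ∈ 𝔪ₐ²`, and for `s = 2` one
writes `R = e₁ (T - e₃) + T` with `T = 1 + e₁ + e₂ + e₃ ∈ 𝔪ₐ²`, which holds because
`T = ∏ (Xₗ + 1) - ∑_{k ≥ 4} eₖ`.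
-/

open MvPolynomial Finset

section SortedTuples

variable {ι M : Type*} [LinearOrder ι] [Fintype ι] [AddCommMonoid M]

theorem sum_pairs_lt_eq_sum_powersetCard_two (f : Finset ι → M) :
    ∑ p ∈ univ.filter (fun p : ι × ι => p.1 < p.2), f {p.1, p.2} =
      ∑ t ∈ powersetCard 2 univ, f t := by
  refine sum_bij' (fun p _ => {p.1, p.2})
    (fun t ht => let g := t.orderEmbOfFin (mem_powersetCard.1 ht).2; (g 0, g 1))
    ?_ ?_ ?_ ?_ (fun _ _ => rfl)
  · rintro ⟨i, j⟩ hp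
    simp only [mem_filter, mem_univ, true_and] at hp
    exact mem_powersetCard.2 ⟨subset_univ _, card_pair hp.ne⟩
  · intro t ht
    simp only [mem_filter, mem_univ, true_and, OrderEmbedding.lt_iff_lt]
    decide
  · rintro ⟨i, j⟩ hp
    simp only [mem_filter, mem_univ, true_and] at hp
    have hmono : StrictMono ![i, j] := Fin.strictMono_iff_lt_succ.2 fun m => by
      fin_cases m
      exact hp
    have h := orderEmbOfFin_unique (card_pair hp.ne) (fun m => by fin_cases m <;> simp) hmono
    simp only [← h]
    rfl
  · intro t ht
    refine Eq.trans ?_ (image_orderEmbOfFin_univ t (mem_powersetCard.1 ht).2)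
    ext x
    simp only [mem_insert, mem_singleton, mem_image, mem_univ, true_and, Fin.exists_fin_succ,
      IsEmpty.exists_iff, or_false]
    simp only [eq_comm]
    rfl

theorem sum_triples_lt_eq_sum_powersetCard_three (f : Finset ι → M) :
    ∑ p ∈ univ.filter (fun p : ι × ι × ι => p.1 < p.2.1 ∧ p.2.1 < p.2.2),
      f {p.1, p.2.1, p.2.2} = ∑ t ∈ powersetCard 3 univ, f t := by
  have card_triple {i j k : ι} (hij : i < j) (hjk : j < k) : #{i, j, k} = 3 :=
    card_eq_three.2 ⟨i, j, k, hij.ne, (hij.trans hjk).ne, hjk.ne, rfl⟩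
  refine sum_bij' (fun p _ => {p.1, p.2.1, p.2.2})
    (fun t ht => let g := t.orderEmbOfFin (mem_powersetCard.1 ht).2; (g 0, g 1, g 2))
    ?_ ?_ ?_ ?_ (fun _ _ => rfl)
  · rintro ⟨i, j, k⟩ hp
    simp only [mem_filter, mem_univ, true_and] at hp
    exact mem_powersetCard.2 ⟨subset_univ _, card_triple hp.1 hp.2⟩
  · intro t ht
    simp only [mem_filter, mem_univ, true_and, OrderEmbedding.lt_iff_lt]
    decide
  · rintro ⟨i, j, k⟩ hp
    simp only [mem_filter, mem_univ, true_and] at hp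
    have hmono : StrictMono ![i, j, k] := Fin.strictMono_iff_lt_succ.2 fun m => by
      fin_cases m
      exacts [hp.1, hp.2]
    have h := orderEmbOfFin_unique (card_triple hp.1 hp.2) (fun m => by fin_cases m <;> simp) hmono
    simp only [← h]
    rfl
  · intro t ht
    refine Eq.trans ?_ (image_orderEmbOfFin_univ t (mem_powersetCard.1 ht).2)
    ext x
    simp only [mem_insert, mem_singleton, mem_image, mem_univ, true_and, Fin.exists_fin_succ,
      IsEmpty.exists_iff, or_false]
    simp only [eq_comm]
    rfl

end SortedTuples

theorem sum_filter_ne_mul {ι R : Type*} [Fintype ι] [DecidableEq ι] [CommRing R]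
    (f g : ι → R) :
    ∑ p ∈ univ.filter (fun p : ι × ι => p.1 ≠ p.2), f p.1 * g p.2 =
      (∑ i, f i) * (∑ i, g i) - ∑ i, f i * g i := by
  have hdiag : univ.filter (fun p : ι × ι => ¬ p.1 ≠ p.2) = (univ : Finset ι).diag := by
    ext p
    simp [mem_diag]
  rw [eq_sub_iff_add_eq, sum_mul_sum, ← sum_diag (f := fun p => f p.1 * g p.2), ← hdiag,
    sum_filter_add_sum_filter_not, ← univ_product_univ, sum_product]

theorem Ideal.prod_mem_pow_card_filter {A ι : Type*} [CommRing A] {I : Ideal A} (t : Finset ι)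
    (p : ι → Prop) [DecidablePred p] {f : ι → A} (hf : ∀ i ∈ t, p i → f i ∈ I) :
    ∏ i ∈ t, f i ∈ I ^ #{i ∈ t | p i} := by
  rw [← prod_filter_mul_prod_filter_not t p]
  refine Ideal.mul_mem_right _ _ ?_
  rw [← prod_const]
  exact Ideal.prod_mem_prod fun i hi => hf i (mem_filter.1 hi).1 (mem_filter.1 hi).2

namespace MvPolynomial

section Symmetric

variable {σ R : Type*} [Fintype σ]

theorem esymm_two_eq_sum_pairs [LinearOrder σ] [CommSemiring R] :
    esymm σ R 2 = ∑ p ∈ univ.filter (fun p : σ × σ => p.1 < p.2), X p.1 * X p.2 := by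
  rw [esymm, ← sum_pairs_lt_eq_sum_powersetCard_two]
  exact sum_congr rfl fun p hp => prod_pair (mem_filter.1 hp).2.ne

theorem esymm_three_eq_sum_triples [LinearOrder σ] [CommSemiring R] :
    esymm σ R 3 = ∑ p ∈ univ.filter (fun p : σ × σ × σ => p.1 < p.2.1 ∧ p.2.1 < p.2.2),
      X p.1 * X p.2.1 * X p.2.2 := by
  rw [esymm, ← sum_triples_lt_eq_sum_powersetCard_three]
  refine sum_congr rfl fun p hp => ?_
  obtain ⟨hij, hjk⟩ := (mem_filter.1 hp).2
  rw [prod_insert (by simp [hij.ne, (hij.trans hjk).ne]), prod_pair hjk.ne, mul_assoc]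

theorem totalDegree_esymm_le [CommSemiring R] (k : ℕ) : (esymm σ R k).totalDegree ≤ k := by
  refine totalDegree_finsetSum_le fun t ht => (totalDegree_finsetProd _ _).trans ?_
  calc ∑ i ∈ t, (X i : MvPolynomial σ R).totalDegree ≤ ∑ _i ∈ t, 1 :=
        sum_le_sum fun i _ => (totalDegree_monomial_le _ _).trans (by simp)
    _ = k := by simp [(mem_powersetCard.1 ht).2]

section CharTwo

variable [CommRing R] [CharP R 2]

theorem psum_two_pow_eq_esymm_one_pow (k : ℕ) : psum σ R (2 ^ k) = esymm σ R 1 ^ 2 ^ k := by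
  rw [psum, esymm_one, sum_pow_char_pow]

theorem psum_three_eq_of_charTwo :
    psum σ R 3 = esymm σ R 1 ^ 3 + esymm σ R 1 * esymm σ R 2 + esymm σ R 3 := by
  have h : psum σ R 3 =
      3 * esymm σ R 3 + esymm σ R 1 * psum σ R 2 - esymm σ R 2 * esymm σ R 1 := by
    rw [psum_eq_mul_esymm_sub_sum σ R 3 (by norm_num)]
    simp [Finset.sum_filter, Finset.Nat.antidiagonal_succ, ← esymm_one]
    ring
  have h2 : psum σ R 2 = esymm σ R 1 ^ 2 := by
    simpa using psum_two_pow_eq_esymm_one_pow (σ := σ) (R := R) 1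
  linear_combination h + esymm σ R 1 * h2 +
    (esymm σ R 3 - esymm σ R 1 * esymm σ R 2) * CharTwo.two_eq_zero (R := MvPolynomial σ R)

end CharTwo

noncomputable def cubicFactor (σ R : Type*) [Fintype σ] [CommSemiring R] : MvPolynomial σ R :=
  (1 + esymm σ R 1) ^ 2 + esymm σ R 2 * (1 + esymm σ R 1) + esymm σ R 3

theorem totalDegree_one_add_esymm_one_le [CommSemiring R] :
    (1 + esymm σ R 1).totalDegree ≤ 1 :=
  (totalDegree_add _ _).trans (max_le (by simp) (totalDegree_esymm_le 1))

theorem totalDegree_cubicFactor_le [CommSemiring R] : (cubicFactor σ R).totalDegree ≤ 3 := by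
  have hu := totalDegree_one_add_esymm_one_le (σ := σ) (R := R)
  have he2 := totalDegree_esymm_le (σ := σ) (R := R) 2
  refine (totalDegree_add _ _).trans (max_le ((totalDegree_add _ _).trans (max_le ?_ ?_))
    (totalDegree_esymm_le 3))
  · exact (totalDegree_pow _ 2).trans (by omega)
  · exact (totalDegree_mul _ _).trans (by omega)

theorem prod_X_add_one_eq_sum_range_esymm [CommSemiring R] {N : ℕ} (hN : Fintype.card σ < N) :
    ∏ i, (X i + 1 : MvPolynomial σ R) = ∑ k ∈ range N, esymm σ R k := by
  rw [prod_add_one, sum_powerset, card_univ]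
  refine sum_subset (range_subset_range.2 hN) fun k _ hk => ?_
  rw [powersetCard_eq_empty.2 (by simpa using hk), sum_empty]

end Symmetric

section PointIdeal

variable {σ R : Type*} [CommRing R]

noncomputable def pointIdeal (a : σ → R) : Ideal (MvPolynomial σ R) :=
  Ideal.span (Set.range fun i => X i - C (a i))

theorem X_sub_C_mem_pointIdeal (a : σ → R) (i : σ) : X i - C (a i) ∈ pointIdeal a :=
  Ideal.subset_span ⟨i, rfl⟩

theorem X_mem_pointIdeal {a : σ → R} {i : σ} (h : a i = 0) : X i ∈ pointIdeal a := by
  simpa [h] using X_sub_C_mem_pointIdeal a i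

theorem X_add_one_mem_pointIdeal [CharP R 2] {a : σ → R} {i : σ} (h : a i = 1) :
    X i + 1 ∈ pointIdeal a := by
  simpa [h, CharTwo.sub_eq_add] using X_sub_C_mem_pointIdeal a i

theorem esymm_one_sub_C_sum_mem_pointIdeal [Fintype σ] (a : σ → R) :
    esymm σ R 1 - C (∑ i, a i) ∈ pointIdeal a := by
  rw [esymm_one, map_sum, ← sum_sub_distrib]
  exact sum_mem fun i _ => X_sub_C_mem_pointIdeal a i

theorem esymm_mem_pointIdeal_pow [Fintype σ] [DecidableEq R] (a : σ → R) (k : ℕ) :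
    esymm σ R k ∈ pointIdeal a ^ (k - #{i | a i ≠ 0}) := by
  classical
  refine sum_mem fun t ht => Ideal.pow_le_pow_right ?_
    (Ideal.prod_mem_pow_card_filter t (a · = 0) fun i _ => X_mem_pointIdeal)
  calc k - #{i | a i ≠ 0} = #t - #{i | a i ≠ 0} := by rw [(mem_powersetCard.1 ht).2]
    _ ≤ #(t \ univ.filter (a · ≠ 0)) := le_card_sdiff _ _
    _ ≤ #{i ∈ t | a i = 0} := card_le_card fun i => by simp

theorem prod_X_add_one_mem_pointIdeal_pow [Fintype σ] [DecidableEq R] [CharP R 2] (a : σ → R) :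
    ∏ i, (X i + 1) ∈ pointIdeal a ^ #{i | a i = 1} :=
  Ideal.prod_mem_pow_card_filter univ (a · = 1) fun _ _ => X_add_one_mem_pointIdeal

end PointIdeal

end MvPolynomial

theorem hasZeroOfMultAtLeast_of_mem_pointIdeal_pow {n : ℕ} {R : Type*} [CommRing R]
    {P : MvPolynomial (Fin n) R} {a : Fin n → R} {k : ℕ} (h : P ∈ pointIdeal a ^ k) :
    hasZeroOfMultAtLeast P a k := by
  have hle : pointIdeal a ≤ (idealOfVars (Fin n) R).comap (bind₁ fun i => X i + C (a i)) := by
    refine Ideal.span_le.2 ?_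
    rintro _ ⟨i, rfl⟩
    simpa using (Ideal.subset_span (Set.mem_range_self i) : X i ∈ idealOfVars (Fin n) R)
  have hP := Ideal.le_comap_pow _ k (Ideal.pow_right_mono hle k h)
  rw [Ideal.mem_comap, mem_pow_idealOfVars_iff] at hP
  intro d hd
  simpa [Finsupp.degree_eq_sum] using hP d hd

theorem P17_eq_mul_cubicFactor (n : ℕ) :
    P17 n = (∏ l, (X l + 1)) * ((1 + esymm (Fin n) (ZMod 2) 1) * cubicFactor (Fin n) (ZMod 2)) := by
  have hB1 : ∑ i : Fin n, (X i ^ 3 + X i ^ 2 + X i : MvPolynomial (Fin n) (ZMod 2)) =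
      psum _ _ 3 + psum _ _ 2 + psum _ _ 1 := by
    simp [psum, sum_add_distrib]
  have hB2 : ∑ p ∈ univ.filter (fun p : Fin n × Fin n => p.1 ≠ p.2),
      (X p.1 ^ 3 + X p.1 ^ 2 : MvPolynomial (Fin n) (ZMod 2)) * X p.2 =
      (psum _ _ 3 + psum _ _ 2) * psum _ _ 1 - (psum _ _ 4 + psum _ _ 3) := by
    rw [sum_filter_ne_mul (fun i => X i ^ 3 + X i ^ 2) X]
    simp [psum, sum_add_distrib, add_mul, ← pow_succ]
  have h1 : psum (Fin n) (ZMod 2) 1 = esymm _ _ 1 := by rw [psum_one, esymm_one]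
  have h2 : psum (Fin n) (ZMod 2) 2 = esymm _ _ 1 ^ 2 := by
    simpa using psum_two_pow_eq_esymm_one_pow (σ := Fin n) (R := ZMod 2) 1
  have h4 : psum (Fin n) (ZMod 2) 4 = esymm _ _ 1 ^ 4 := by
    simpa using psum_two_pow_eq_esymm_one_pow (σ := Fin n) (R := ZMod 2) 2
  rw [P17]
  congr 1
  rw [hB1, hB2, ← esymm_two_eq_sum_pairs, ← esymm_three_eq_sum_triples,
    psum_three_eq_of_charTwo, h1, h2, h4, cubicFactor]
  set u := esymm (Fin n) (ZMod 2) 1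
  set v := esymm (Fin n) (ZMod 2) 2
  linear_combination (-u - u ^ 2 - u * v) * CharTwo.two_eq_zero (R := MvPolynomial (Fin n) (ZMod 2))

theorem totalDegree_P17_le (n : ℕ) : (P17 n).totalDegree ≤ n + 4 := by
  have hE : (∏ l : Fin n, (X l + 1 : MvPolynomial (Fin n) (ZMod 2))).totalDegree ≤ n := by
    refine (totalDegree_finsetProd _ _).trans ?_
    calc ∑ l : Fin n, (X l + 1 : MvPolynomial (Fin n) (ZMod 2)).totalDegree
        ≤ ∑ _l : Fin n, 1 :=
          sum_le_sum fun l _ => (totalDegree_add _ _).trans (by simp)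
      _ = n := by simp
  have hu := totalDegree_one_add_esymm_one_le (σ := Fin n) (R := ZMod 2)
  have hR := totalDegree_cubicFactor_le (σ := Fin n) (R := ZMod 2)
  rw [P17_eq_mul_cubicFactor]
  exact (totalDegree_mul _ _).trans (add_le_add hE ((totalDegree_mul _ _).trans (by omega)))

section ZModTwo

variable {σ : Type*} [Fintype σ] (a : σ → ZMod 2)

theorem card_eq_one_eq_card_ne_zero : #{i | a i = 1} = #{i | a i ≠ 0} := by
  congr 1
  exact filter_congr fun i _ => ⟨fun h => h ▸ one_ne_zero, Fin.eq_one_of_ne_zero _⟩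

theorem sum_eq_card_ne_zero : ∑ i, a i = #{i | a i ≠ 0} := by
  rw [← sum_filter_ne_zero, ← nsmul_one, ← sum_const]
  exact sum_congr rfl fun i hi => Fin.eq_one_of_ne_zero _ (mem_filter.1 hi).2

theorem one_add_esymm_one_mem_pointIdeal (h : Odd #{i | a i ≠ 0}) :
    1 + esymm σ (ZMod 2) 1 ∈ pointIdeal a := by
  have := esymm_one_sub_C_sum_mem_pointIdeal a
  rwa [sum_eq_card_ne_zero, (ZMod.natCast_eq_one_iff_odd).2 h, map_one, CharTwo.sub_eq_add,
    add_comm] at this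

theorem esymm_one_mem_pointIdeal (h : #{i | a i ≠ 0} = 2) : esymm σ (ZMod 2) 1 ∈ pointIdeal a := by
  have := esymm_one_sub_C_sum_mem_pointIdeal a
  rwa [sum_eq_card_ne_zero, h, ZMod.natCast_self, map_zero, sub_zero] at this

theorem cubicFactor_mem_pointIdeal_pow_two_of_card_eq_one (h : #{i | a i ≠ 0} = 1) :
    cubicFactor σ (ZMod 2) ∈ pointIdeal a ^ 2 := by
  have hu := one_add_esymm_one_mem_pointIdeal a (h ▸ odd_one)
  have he2 : esymm σ (ZMod 2) 2 ∈ pointIdeal a := by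
    simpa [h] using esymm_mem_pointIdeal_pow a 2
  have he3 : esymm σ (ZMod 2) 3 ∈ pointIdeal a ^ 2 := by
    simpa [h] using esymm_mem_pointIdeal_pow a 3
  rw [cubicFactor]
  exact add_mem (add_mem (Ideal.pow_mem_pow hu 2)
    (pow_two (pointIdeal a) ▸ Ideal.mul_mem_mul he2 hu)) he3

theorem cubicFactor_mem_pointIdeal_pow_two_of_card_eq_two (h : #{i | a i ≠ 0} = 2) :
    cubicFactor σ (ZMod 2) ∈ pointIdeal a ^ 2 := by
  set e := esymm σ (ZMod 2)
  have hE : ∏ i, (X i + 1) ∈ pointIdeal a ^ 2 := by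
    simpa [card_eq_one_eq_card_ne_zero, h] using prod_X_add_one_mem_pointIdeal_pow a
  have hT : 1 + e 1 + e 2 + e 3 ∈ pointIdeal a ^ 2 := by
    rw [prod_X_add_one_eq_sum_range_esymm (N := 4 + Fintype.card σ) (by omega), sum_range_add] at hE
    have hrest : ∑ k ∈ range (Fintype.card σ), e (4 + k) ∈ pointIdeal a ^ 2 :=
      sum_mem fun k _ => Ideal.pow_le_pow_right (by omega) (esymm_mem_pointIdeal_pow a (4 + k))
    simpa [sum_range_succ, e, esymm_zero] using sub_mem hE hrest
  have he3 : e 3 ∈ pointIdeal a := by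
    simpa [h] using esymm_mem_pointIdeal_pow a 3
  have hsplit :
      cubicFactor σ (ZMod 2) = e 1 * (1 + e 1 + e 2 + e 3 - e 3) + (1 + e 1 + e 2 + e 3) := by
    rw [cubicFactor]
    ring
  rw [hsplit]
  refine add_mem ?_ hT
  rw [pow_two]
  exact Ideal.mul_mem_mul (esymm_one_mem_pointIdeal a h)
    (sub_mem (Ideal.pow_le_self two_ne_zero hT) he3)

theorem one_add_esymm_one_mul_cubicFactor_mem_pointIdeal_pow (hs : 1 ≤ #{i | a i ≠ 0}) :
    (1 + esymm σ (ZMod 2) 1) * cubicFactor σ (ZMod 2) ∈ pointIdeal a ^ (4 - #{i | a i ≠ 0}) := by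
  obtain h | h | h | h : #{i | a i ≠ 0} = 1 ∨ #{i | a i ≠ 0} = 2 ∨ #{i | a i ≠ 0} = 3 ∨
      4 ≤ #{i | a i ≠ 0} := by omega
  · rw [h, show 4 - 1 = 1 + 2 from rfl, pow_add, pow_one]
    exact Ideal.mul_mem_mul (one_add_esymm_one_mem_pointIdeal a (h ▸ odd_one))
      (cubicFactor_mem_pointIdeal_pow_two_of_card_eq_one a h)
  · rw [h]
    exact Ideal.mul_mem_left _ _ (cubicFactor_mem_pointIdeal_pow_two_of_card_eq_two a h)
  · rw [h, show 4 - 3 = 1 from rfl, pow_one]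
    exact Ideal.mul_mem_right _ _ (one_add_esymm_one_mem_pointIdeal a (h ▸ by decide))
  · rw [Nat.sub_eq_zero_of_le h, pow_zero, Ideal.one_eq_top]
    exact Submodule.mem_top

end ZModTwo

theorem P17_mem_pointIdeal_pow {n : ℕ} {a : Fin n → ZMod 2} (ha : a ≠ 0) :
    P17 n ∈ pointIdeal a ^ 4 := by
  obtain ⟨i, hi⟩ := Function.ne_iff.1 ha
  have hs : 1 ≤ #{i | a i ≠ 0} := card_pos.2 ⟨i, by simpa using hi⟩
  have hE := card_eq_one_eq_card_ne_zero a ▸ prod_X_add_one_mem_pointIdeal_pow a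
  have hQ := one_add_esymm_one_mul_cubicFactor_mem_pointIdeal_pow a hs
  have hP := Ideal.mul_mem_mul hE hQ
  rw [← pow_add] at hP
  rw [P17_eq_mul_cubicFactor]
  exact Ideal.pow_le_pow_right (by omega) hP

theorem char_two_counterexample_general (n : ℕ) :
    (P17 n).totalDegree ≤ n + 4 ∧
    MvPolynomial.eval (0 : Fin n → ZMod 2) (P17 n) ≠ 0 ∧
    ∀ a : Fin n → ZMod 2, a ≠ 0 → hasZeroOfMultAtLeast (P17 n) a 4 :=
  ⟨totalDegree_P17_le n, by simp [P17], fun _ ha =>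
    hasZeroOfMultAtLeast_of_mem_pointIdeal_pow (P17_mem_pointIdeal_pow ha)⟩

theorem char_two_counterexample (n : ℕ) (hn : 1 ≤ n) :
    (P17 n).totalDegree ≤ n + 4 ∧
    MvPolynomial.eval (0 : Fin n → ZMod 2) (P17 n) ≠ 0 ∧
    ∀ a : Fin n → ZMod 2, a ≠ 0 → hasZeroOfMultAtLeast (P17 n) a 4 :=
  char_two_counterexample_general n
end

section
/- Let k ≥ 3, n ≥ 1, and let P ∈ ℝ[x_1,...,x_n] be a polynomial of degree at most n+2k-5, none of whose monomials is divisible by a product of k-1 squares of variables, having zeroes of multiplicity at least k-1 at all points of {0,1}^n \ {(0,...,0)}. Then for each j ∈ {1,...,n}, the polynomial x_j(x_j − 1) · P has degree at most n+2k-3, none of its monomials is divisible by a product of k squares of variables, and it has zeroes of multiplicity at least k at all points of {0,1}^n \ {(0,...,0)}. -/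
/-- The monomial with exponent vector `d` is divisible by a product of `r` squares of
variables `x_{i₁}² ⋯ x_{i_r}²` (indices not necessarily distinct). -/
def divisibleByRSquares {n : ℕ} (d : Fin n →₀ ℕ) (r : ℕ) : Prop :=
  ∃ f : Fin n → ℕ, (∑ i, f i) = r ∧ ∀ i, 2 * f i ≤ d i

/-!
Multiplying by `x_j (x_j - 1)` raises the degree by two. Its monomials are `x_j²` and `x_j`,
so if `x_j^m s` with `m ≤ 2` contains `k` squares, then `s` already contains `k - 1` of them
(remove one square at `x_j` if one is used there, any other one otherwise). Finally,
`x_j (x_j - 1)` vanishes on `{0,1}^n`, and the order of vanishing is additive under products: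
the lowest-degree part of `P(x + a) Q(x + a)` is at least the sum of those of the factors.
-/

open MvPolynomial

section
variable {n : ℕ} {R : Type*} [CommRing R]

theorem hasZeroOfMultAtLeast.mul {P Q : MvPolynomial (Fin n) R} {a : Fin n → R} {k m : ℕ}
    (hP : hasZeroOfMultAtLeast P a k) (hQ : hasZeroOfMultAtLeast Q a m) :
    hasZeroOfMultAtLeast (P * Q) a (k + m) := by
  intro d hd
  rw [map_mul] at hd
  obtain ⟨b, hb, c, hc, rfl⟩ := Finset.mem_add.1 (support_mul _ _ hd)
  simpa only [Finsupp.coe_add, Pi.add_apply, Finset.sum_add_distrib]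
    using add_le_add (hP b hb) (hQ c hc)

theorem hasZeroOfMultAtLeast_one_of_eval_eq_zero {P : MvPolynomial (Fin n) R} {a : Fin n → R}
    (h : eval a P = 0) : hasZeroOfMultAtLeast P a 1 := by
  -- the constant coefficient of `P(x + a)` is `P(a)`
  intro d hd
  by_contra! hd0
  obtain rfl : d = 0 := by
    ext i
    simpa using Finset.sum_eq_zero_iff.1 (Nat.lt_one_iff.1 hd0) i (Finset.mem_univ i)
  refine mem_support_iff.1 hd ?_
  rw [← constantCoeff_eq, ← eval_zero]
  change eval₂Hom (RingHom.id R) 0 _ = 0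
  rw [eval₂Hom_bind₁]
  simpa using h

theorem support_X_mul_X_sub_one_subset (j : Fin n) :
    (X j * (X j - 1) : MvPolynomial (Fin n) R).support ⊆
      {Finsupp.single j 2, Finsupp.single j 1} := by
  rw [mul_sub, mul_one, ← pow_two, X_pow_eq_monomial, X]
  refine (support_sub _ _ _).trans (Finset.union_subset ?_ ?_) <;>
    refine support_monomial_subset.trans ?_ <;> simp

theorem totalDegree_X_mul_X_sub_one_mul_le (j : Fin n) (P : MvPolynomial (Fin n) R) :
    (X j * (X j - 1) * P).totalDegree ≤ P.totalDegree + 2 := by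
  have hXX : (X j * (X j - 1) : MvPolynomial (Fin n) R).totalDegree ≤ 2 :=
    Finset.sup_le fun d hd => by
      rcases Finset.mem_insert.1 (support_X_mul_X_sub_one_subset j hd) with rfl | hd <;>
        simp_all
  linarith [totalDegree_mul (X j * (X j - 1) : MvPolynomial (Fin n) R) P]

theorem divisibleByRSquares.of_single_add {s : Fin n →₀ ℕ} {j : Fin n} {m r : ℕ} (hm : m ≤ 2)
    (h : divisibleByRSquares (Finsupp.single j m + s) (r + 1)) : divisibleByRSquares s r := by
  obtain ⟨f, hsum, hle⟩ := h
  obtain ⟨i, hi, hij⟩ : ∃ i, 0 < f i ∧ (i = j ∨ f j = 0) := by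
    by_cases hfj : 0 < f j
    · exact ⟨j, hfj, .inl rfl⟩
    · obtain ⟨i, -, hi⟩ := Finset.exists_ne_zero_of_sum_ne_zero (hsum.trans_ne r.succ_ne_zero)
      exact ⟨i, Nat.pos_of_ne_zero hi, .inr (by omega)⟩
  refine ⟨Function.update f i (f i - 1), ?_, fun l => ?_⟩
  · rw [Finset.sum_update_of_mem (Finset.mem_univ i)]
    rw [Finset.sum_eq_add_sum_sdiff_singleton_of_mem (Finset.mem_univ i)] at hsum
    omega
  · have := hle l
    rcases eq_or_ne l i with rfl | hli <;> rcases eq_or_ne l j with rfl | hlj <;>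
      simp_all [Finsupp.single_apply] <;> omega

theorem not_divisibleByRSquares_succ_of_mem_support_X_mul_X_sub_one_mul
    {P : MvPolynomial (Fin n) R} {r : ℕ} (hP : ∀ d ∈ P.support, ¬ divisibleByRSquares d r)
    (j : Fin n) : ∀ d ∈ (X j * (X j - 1) * P).support, ¬ divisibleByRSquares d (r + 1) := by
  intro d hd hdiv
  obtain ⟨e, he, s, hs, rfl⟩ := Finset.mem_add.1 (support_mul _ _ hd)
  obtain ⟨m, hm, rfl⟩ : ∃ m ≤ 2, e = Finsupp.single j m := by
    rcases Finset.mem_insert.1 (support_X_mul_X_sub_one_subset j he) with rfl | he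
    · exact ⟨2, le_rfl, rfl⟩
    · exact ⟨1, one_le_two, Finset.mem_singleton.1 he⟩
  exact hP s hs (hdiv.of_single_add hm)

end

open MvPolynomial in
theorem multiply_by_xj_xj_sub_one_general (k n : ℕ) (hk : 3 ≤ k)
    (P : MvPolynomial (Fin n) ℝ)
    (hdeg : P.totalDegree ≤ n + 2 * k - 5)
    (hred : ∀ d ∈ P.support, ¬ divisibleByRSquares d (k - 1))
    (hvan : ∀ a : Fin n → ℝ, (∀ i, a i = 0 ∨ a i = 1) → a ≠ 0 →
      hasZeroOfMultAtLeast P a (k - 1))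
    (j : Fin n) :
    (X j * (X j - 1) * P).totalDegree ≤ n + 2 * k - 3 ∧
    (∀ d ∈ (X j * (X j - 1) * P).support, ¬ divisibleByRSquares d k) ∧
    (∀ a : Fin n → ℝ, (∀ i, a i = 0 ∨ a i = 1) → a ≠ 0 →
      hasZeroOfMultAtLeast (X j * (X j - 1) * P) a k) := by
  have hk1 : k - 1 + 1 = k := by omega
  refine ⟨?_, hk1 ▸ not_divisibleByRSquares_succ_of_mem_support_X_mul_X_sub_one_mul hred j,
    fun a ha hne => ?_⟩
  · have := totalDegree_X_mul_X_sub_one_mul_le j P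
    omega
  · have hroot : eval a (X j * (X j - 1) : MvPolynomial (Fin n) ℝ) = 0 := by
      rcases ha j with h | h <;> simp [h]
    rw [← hk1, add_comm]
    exact (hasZeroOfMultAtLeast_one_of_eval_eq_zero hroot).mul (hvan a ha hne)

open MvPolynomial in
theorem multiply_by_xj_xj_sub_one (k n : ℕ) (hk : 3 ≤ k) (hn : 1 ≤ n)
    (P : MvPolynomial (Fin n) ℝ)
    (hdeg : P.totalDegree ≤ n + 2 * k - 5)
    (hred : ∀ d ∈ P.support, ¬ divisibleByRSquares d (k - 1))
    (hvan : ∀ a : Fin n → ℝ, (∀ i, a i = 0 ∨ a i = 1) → a ≠ 0 →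
      hasZeroOfMultAtLeast P a (k - 1))
    (j : Fin n) :
    (X j * (X j - 1) * P).totalDegree ≤ n + 2 * k - 3 ∧
    (∀ d ∈ (X j * (X j - 1) * P).support, ¬ divisibleByRSquares d k) ∧
    (∀ a : Fin n → ℝ, (∀ i, a i = 0 ∨ a i = 1) → a ≠ 0 →
      hasZeroOfMultAtLeast (X j * (X j - 1) * P) a k) :=
  multiply_by_xj_xj_sub_one_general k n hk P hdeg hred hvan j
end

section
/- Let k ≥ 2 and n ≥ 2k-3. For every odd degree sequence argument the following holds: the polynomials x_1···x_n · (x_1^m + ... + x_n^m) · x_1^{2d_1}···x_n^{2d_n}, indexed by tuples of non-negative integers (m, d_1, ..., d_n) with m + 2(d_1 + ... + d_n) = 2k − 3, are linearly independent in ℝ[x_1,...,x_n]. -/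
/-!
Expanding, the polynomial indexed by `(m, d)` is `∑ⱼ x^{1 + 2d + m eⱼ}`. As `m` is odd, the
coordinate `j` is the only even one of the exponent `1 + 2d + m eⱼ`, so such a monomial determines
`j`, the `dᵢ` with `i ≠ j` and `m + 2dⱼ`. Since `∑ dᵢ ≤ k - 2 < n`, some `d_{j₀}` vanishes; then the
monomial `x^{1 + 2d + m e_{j₀}}` occurs in the polynomial of `(m, d)` with coefficient `1`, and in
the polynomial of any other index `(m', d')` only if `m' < m`. The family is therefore triangular
with respect to `m`.
-/

open MvPolynomial Finset

theorem linearIndependent_of_triangular {ι R M : Type*} [Ring R] [AddCommGroup M] [Module R M]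
    (v : ι → M) (f : ι → M →ₗ[R] R) (μ : ι → ℕ) (hdiag : ∀ i, IsUnit (f i (v i)))
    (htri : ∀ i j, f i (v j) ≠ 0 → j = i ∨ μ j < μ i) : LinearIndependent R v := by
  rw [linearIndependent_iff']
  intro s g hsum i
  induction i using (measure μ).wf.induction with
  | _ i IH =>
  intro hi
  have hcollapse : ∑ j ∈ s, g j * f i (v j) = g i * f i (v i) := by
    refine sum_eq_single_of_mem i hi fun j hj hji => ?_
    by_cases hfij : f i (v j) = 0
    · rw [hfij, mul_zero]
    · rw [IH j ((htri i j hfij).resolve_left hji) hj, zero_mul]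
  have hfi := congrArg (f i) hsum
  simp only [map_sum, map_smul, smul_eq_mul, map_zero, hcollapse] at hfi
  exact (hdiag i).mul_left_eq_zero.mp hfi

section WkPolynomial

variable {σ : Type*} [Fintype σ]

variable (R : Type*) [CommRing R] in
noncomputable def wkPolynomial (m : ℕ) (d : σ → ℕ) : MvPolynomial σ R :=
  (∏ i, X i) * (∑ i, X i ^ m) * ∏ i, X i ^ (2 * d i)

noncomputable def tiltedExponent (m : ℕ) (d : σ → ℕ) (j : σ) : σ →₀ ℕ :=
  Finsupp.equivFunOnFinite.symm (fun i => 2 * d i + 1) + Finsupp.single j m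

theorem tiltedExponent_apply [DecidableEq σ] (m : ℕ) (d : σ → ℕ) (j i : σ) :
    tiltedExponent m d j i = 2 * d i + 1 + if j = i then m else 0 := by
  simp [tiltedExponent, Finsupp.single_apply]

theorem wkPolynomial_eq_sum_monomial (R : Type*) [CommRing R] (m : ℕ) (d : σ → ℕ) :
    wkPolynomial R m d = ∑ j, monomial (tiltedExponent m d j) 1 := by
  have hodd : monomial (Finsupp.equivFunOnFinite.symm (fun i => 2 * d i + 1)) (1 : R)
      = (∏ i, X i) * ∏ i, X i ^ (2 * d i) := by
    rw [monomial_eq, C_1, one_mul, Finsupp.prod_fintype _ _ fun _ => pow_zero _,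
      ← prod_mul_distrib]
    simp [pow_succ, mul_comm]
  rw [wkPolynomial, mul_sum, sum_mul]
  refine sum_congr rfl fun j _ => ?_
  rw [tiltedExponent, ← mul_one (1 : R), ← monomial_mul, hodd, ← X_pow_eq_monomial]
  ring

/-- Since `m` is odd, `j` is the only coordinate of `tiltedExponent m d j` that is even. -/
theorem eq_of_tiltedExponent_eq {m m' : ℕ} {d d' : σ → ℕ} {j j' : σ} (hm : Odd m)
    (hm' : Odd m') (h : tiltedExponent m' d' j' = tiltedExponent m d j) :
    j' = j ∧ (∀ i ≠ j, d' i = d i) ∧ m' + 2 * d' j = m + 2 * d j := by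
  classical
  have hcoord i := DFunLike.congr_fun h i
  simp only [tiltedExponent_apply] at hcoord
  obtain ⟨a, rfl⟩ := hm
  obtain ⟨b, rfl⟩ := hm'
  have hj : j' = j := by
    by_contra hne
    have := hcoord j
    simp only [hne, if_true, if_false] at this
    omega
  subst hj
  refine ⟨rfl, fun i hi => ?_, ?_⟩
  · have := hcoord i
    simp only [Ne.symm hi, if_false] at this
    omega
  · have := hcoord j'
    simp only [if_true] at this
    omega

variable {R : Type*} [CommRing R]

theorem coeff_tiltedExponent_wkPolynomial_self {m : ℕ} (hm : Odd m) (d : σ → ℕ) (j : σ) :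
    coeff (tiltedExponent m d j) (wkPolynomial R m d) = 1 := by
  classical
  rw [wkPolynomial_eq_sum_monomial, coeff_sum, sum_eq_single j]
  · rw [coeff_monomial, if_pos rfl]
  · intro j' _ hj'
    rw [coeff_monomial, if_neg fun h => hj' (eq_of_tiltedExponent_eq hm hm h).1]
  · simp

theorem exists_tiltedExponent_eq_of_coeff_ne_zero {m : ℕ} {d : σ → ℕ} {e : σ →₀ ℕ}
    (h : coeff e (wkPolynomial R m d) ≠ 0) : ∃ j, tiltedExponent m d j = e := by
  classical
  rw [wkPolynomial_eq_sum_monomial, coeff_sum] at h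
  obtain ⟨j, -, hj⟩ := exists_ne_zero_of_sum_ne_zero h
  exact ⟨j, by_contra fun hne => hj (by rw [coeff_monomial, if_neg hne])⟩

theorem linearIndependent_wkPolynomial (S : ℕ × (σ → ℕ) → Prop) (hodd : ∀ q, S q → Odd q.1)
    (hzero : ∀ q, S q → ∃ j, q.2 j = 0) :
    LinearIndependent R (fun q : {q // S q} => wkPolynomial R q.1.1 q.1.2) := by
  choose j₀ hj₀ using fun q : {q // S q} => hzero q.1 q.2
  refine linearIndependent_of_triangular _
    (fun p => lcoeff R (tiltedExponent p.1.1 p.1.2 (j₀ p))) (fun p => p.1.1)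
    (fun p => by
      rw [lcoeff_apply, coeff_tiltedExponent_wkPolynomial_self (hodd _ p.2)]
      exact isUnit_one)
    fun p q hpq => ?_
  obtain ⟨j, hj⟩ := exists_tiltedExponent_eq_of_coeff_ne_zero hpq
  obtain ⟨rfl, hoff, hdiag⟩ := eq_of_tiltedExponent_eq (hodd _ p.2) (hodd _ q.2) hj
  have hp := hj₀ p
  rcases Nat.eq_zero_or_pos (q.1.2 (j₀ p)) with hq | hq
  · left
    have hd : q.1.2 = p.1.2 := funext fun i => by
      rcases eq_or_ne i (j₀ p) with rfl | hi
      · rw [hq, hp]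
      · exact hoff i hi
    exact Subtype.ext (Prod.ext (by omega) hd)
  · right
    show q.1.1 < p.1.1
    omega

end WkPolynomial

open MvPolynomial in
/-- The polynomials `x₁⋯x_n (x₁^m + ⋯ + x_n^m) x₁^{2d₁} ⋯ x_n^{2d_n}`, indexed by tuples
`(m, d₁, …, d_n)` of non-negative integers with `m + 2(d₁ + ⋯ + d_n) = 2k - 3`, are
linearly independent in `ℝ[x₁,…,x_n]`. -/
theorem basis_Wk_linear_independent (k n : ℕ) (hk : 2 ≤ k) (hn : 2 * k - 3 ≤ n) :
    LinearIndependent ℝ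
      (fun p : {q : ℕ × (Fin n → ℕ) // q.1 + 2 * ∑ i, q.2 i = 2 * k - 3} =>
        ((∏ i : Fin n, X i) * (∑ i : Fin n, X i ^ p.1.1)
          * ∏ i : Fin n, X i ^ (2 * p.1.2 i) : MvPolynomial (Fin n) ℝ)) := by
  refine linearIndependent_wkPolynomial _ (fun q hq => ⟨k - 2 - ∑ i, q.2 i, by omega⟩)
    fun q hq => ?_
  have hsum : ∑ i, q.2 i < ∑ _i : Fin n, 1 := by
    simp only [sum_const, card_univ, Fintype.card_fin, smul_eq_mul, mul_one]
    omega
  obtain ⟨j, -, hj⟩ := exists_lt_of_sum_lt hsum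
  exact ⟨j, Nat.lt_one_iff.mp hj⟩
end
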